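/- arXiv:1310.1606 — 10 statements merged into one kernel-verified Lean document; each statement's English description precedes it below -/
import Mathlib

section
/- Let n ≥ 1 and let U_n be the n×n block matrix whose (1,1) entry is 1/√n, whose first row and first column off-diagonal blocks are (√(n−1)/√n)·e_{n-1}^T and (√(n−1)/√n)·e_{n-1} (where e_{n-1} ∈ ℝ^{n-1} has every entry 1/√(n-1)), and whose lower-right (n−1)×(n−1) block is V_{n-1} = I_{n-1} − (1 + 1/√n)·J_{n-1}. Then for every real (n−1)×(n−1) matrix X, the matrix U_n · (1 ⊕ X) · U_n has all row sums and all column sums equal to 1, where 1 ⊕ X denotes the n×n block-diagonal matrix with (1,1) entry 1 and lower-right block X. -/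
/-!
Since `Uₙ` is symmetric it suffices to show `Uₙ (1 ⊕ X) Uₙ 𝟙 = 𝟙` for every `X` (column sums
are the row sums of the transpose `Uₙ (1 ⊕ Xᵀ) Uₙ`). The row sums of `Uₙ` are `√n e₁`, the vector
`e₁` is fixed by `1 ⊕ X`, and the first column of `Uₙ` is constant `1/√n`, so
`Uₙ (1 ⊕ X) Uₙ 𝟙 = √n · Uₙ e₁ = 𝟙`.
-/

/-- The matrix `U_n` (with `n = m+1`): block matrix with `(1,1)` entry `1/√n`,
first row/column off-diagonal blocks `(√(n-1)/√n)·e_{n-1}ᵀ` and `(√(n-1)/√n)·e_{n-1}`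
(where `e_{n-1}` has all entries `1/√(n-1)`), and lower-right block
`V_{n-1} = I_{n-1} - (1 + 1/√n)·J_{n-1}`, `J_{n-1}` having all entries `1/(n-1)`. -/
noncomputable def Umat (m : ℕ) : Matrix (Fin (m + 1)) (Fin (m + 1)) ℝ :=
  Matrix.of fun i j =>
    if i = 0 ∧ j = 0 then 1 / Real.sqrt (m + 1)
    else if i = 0 ∨ j = 0 then Real.sqrt m / Real.sqrt (m + 1) * (1 / Real.sqrt m)
    else (if i = j then (1 : ℝ) else 0) - (1 + 1 / Real.sqrt (m + 1)) * (1 / m)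

/-- The block-diagonal matrix `1 ⊕ X`. -/
def oneOplus {m : ℕ} (X : Matrix (Fin m) (Fin m) ℝ) : Matrix (Fin (m + 1)) (Fin (m + 1)) ℝ :=
  Matrix.of fun i j =>
    if hi : i = 0 then (if j = 0 then 1 else 0)
    else if hj : j = 0 then 0 else X (i.pred hi) (j.pred hj)

open Matrix

theorem Matrix.mul_mul_mulVec_eq_self {n R : Type*} [Fintype n] [CommSemiring R]
    {U A : Matrix n n R} {v w : n → R} {c : R}
    (hUv : U *ᵥ v = c • w) (hAw : A *ᵥ w = w) (hUw : c • (U *ᵥ w) = v) :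
    (U * A * U) *ᵥ v = v := by
  rw [← mulVec_mulVec, ← mulVec_mulVec, hUv, mulVec_smul, hAw, mulVec_smul, hUw]

section Umat

variable (m : ℕ)

theorem Umat_zero_zero : Umat m 0 0 = 1 / √(m + 1) := by
  simp [Umat]

theorem Umat_zero_succ (j : Fin m) : Umat m 0 j.succ = 1 / √(m + 1) := by
  have hm : √(m : ℝ) ≠ 0 := by simpa using j.pos.ne'
  simp only [Umat, of_apply, Fin.succ_ne_zero, and_false, if_false, true_or, if_true]
  field_simp

theorem Umat_succ_zero (i : Fin m) : Umat m i.succ 0 = 1 / √(m + 1) := by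
  have hm : √(m : ℝ) ≠ 0 := by simpa using i.pos.ne'
  simp only [Umat, of_apply, Fin.succ_ne_zero, false_and, if_false, or_true, if_true]
  field_simp

theorem Umat_succ_succ (i j : Fin m) :
    Umat m i.succ j.succ = (1 : Matrix (Fin m) (Fin m) ℝ) i j - (1 + 1 / √(m + 1)) / m := by
  simp only [Umat, of_apply, Fin.succ_ne_zero, and_false, or_false, if_false, Fin.succ_inj,
    one_apply]
  ring

theorem Umat_col_zero : (Umat m).col 0 = fun _ => 1 / √(m + 1) := by
  ext i
  cases i using Fin.cases with
  | zero => exact Umat_zero_zero m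
  | succ i => exact Umat_succ_zero m i

theorem Umat_isSymm : (Umat m).IsSymm := by
  refine IsSymm.ext fun i j => ?_
  cases i using Fin.cases <;> cases j using Fin.cases <;>
    simp only [Umat_zero_zero, Umat_zero_succ, Umat_succ_zero, Umat_succ_succ, one_apply, eq_comm]

theorem Umat_mulVec_one : Umat m *ᵥ 1 = √(m + 1) • Pi.single 0 1 := by
  have hs : √((m : ℝ) + 1) ^ 2 = m + 1 := Real.sq_sqrt (by positivity)
  have hs₀ : √((m : ℝ) + 1) ≠ 0 := by positivity
  ext k
  cases k using Fin.cases with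
  | zero =>
    simp only [mulVec, dotProduct, Fin.sum_univ_succ, Umat_zero_zero, Umat_zero_succ,
      Pi.one_apply, mul_one, Finset.sum_const, Finset.card_univ, Fintype.card_fin, nsmul_eq_mul,
      Pi.smul_apply, Pi.single_eq_same, smul_eq_mul]
    field_simp
    rw [hs]
    ring
  | succ i =>
    have hm : (m : ℝ) ≠ 0 := by simpa using i.pos.ne'
    simp only [mulVec, dotProduct, Fin.sum_univ_succ, Umat_succ_zero, Umat_succ_succ,
      Pi.one_apply, mul_one, one_apply, Finset.sum_sub_distrib, Finset.sum_ite_eq,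
      Finset.mem_univ, if_true, Finset.sum_const, Finset.card_univ, Fintype.card_fin,
      nsmul_eq_mul, Pi.smul_apply, Pi.single_eq_of_ne (Fin.succ_ne_zero i), smul_eq_mul, mul_zero]
    field_simp
    ring

end Umat

section oneOplus

variable {m : ℕ} (X : Matrix (Fin m) (Fin m) ℝ)

theorem oneOplus_mulVec_single_zero : oneOplus X *ᵥ Pi.single 0 1 = Pi.single 0 1 := by
  rw [mulVec_single_one]
  ext i
  cases i using Fin.cases <;> simp [oneOplus]

theorem oneOplus_transpose : (oneOplus X)ᵀ = oneOplus Xᵀ := by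
  ext i j
  cases i using Fin.cases <;> cases j using Fin.cases <;> simp [oneOplus]

end oneOplus

theorem Umat_mul_oneOplus_mul_Umat_mulVec_one (m : ℕ) (X : Matrix (Fin m) (Fin m) ℝ) :
    (Umat m * oneOplus X * Umat m) *ᵥ 1 = 1 := by
  refine mul_mul_mulVec_eq_self (Umat_mulVec_one m) (oneOplus_mulVec_single_zero X) ?_
  have hs₀ : √((m : ℝ) + 1) ≠ 0 := by positivity
  ext i
  simp [Umat_col_zero, hs₀]

/-- For every real `(n-1) × (n-1)` matrix `X` (here `n = m+1 ≥ 1`), the matrix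
`Uₙ * (1 ⊕ X) * Uₙ` has all row sums and all column sums equal to `1`. -/
theorem stmt1 (m : ℕ) (X : Matrix (Fin m) (Fin m) ℝ) :
    (∀ i, ∑ j, (Umat m * oneOplus X * Umat m) i j = 1) ∧
    (∀ j, ∑ i, (Umat m * oneOplus X * Umat m) i j = 1) := by
  have hT : (Umat m * oneOplus X * Umat m)ᵀ = Umat m * oneOplus Xᵀ * Umat m := by
    rw [transpose_mul, transpose_mul, (Umat_isSymm m).eq, oneOplus_transpose, Matrix.mul_assoc]
  constructor
  · intro i
    simpa [mulVec, dotProduct] using congrFun (Umat_mul_oneOplus_mul_Umat_mulVec_one m X) i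
  · intro j
    simpa [← hT, mulVec, dotProduct] using
      congrFun (Umat_mul_oneOplus_mul_Umat_mulVec_one m Xᵀ) j
end

section
/- Let A be any real n×n matrix and set B* = (I_n − J_n)·A·(I_n − J_n) + J_n. Then B* has all row sums and column sums equal to 1, and B* is the unique closest such matrix to A with respect to the Frobenius norm: for every real n×n matrix C all of whose row sums and column sums equal 1, ‖A − B*‖_F ≤ ‖A − C‖_F, with equality only if C = B*. -/
/-!
With `P = 1 - J`, the matrix `B* = P A P + J` has unit line sums because `P` kills the all-ones
vector on both sides while `J` fixes it. Expanding, `A - B* = J (A - A J) + (A - 1) J`, whose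
`(i, j)` entry has the form `r i + c j`. Such a matrix is Frobenius-orthogonal to every `D` with
zero row and column sums, in particular to `D = C - B*` for any `C` with unit line sums, so
`‖A - C‖² = ‖A - B*‖² + ‖C - B*‖²` by Pythagoras.
-/

/-- The matrix `J_n`: every entry equal to `1/n`. -/
noncomputable def Jmat (n : ℕ) : Matrix (Fin n) (Fin n) ℝ :=
  Matrix.of fun _ _ => (1 : ℝ) / n

/-- The Frobenius norm `‖M‖_F = sqrt (Σ_{i,j} m_{ij}²)`. -/
noncomputable def frobNorm {n : ℕ} (M : Matrix (Fin n) (Fin n) ℝ) : ℝ :=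
  Real.sqrt (∑ i, ∑ j, (M i j) ^ 2)

open Matrix Finset

section Orthogonality

variable {m n R : Type*} [Fintype m] [Fintype n]

theorem sum_sum_add_mul_eq_zero [NonUnitalNonAssocSemiring R] (r : m → R) (c : n → R)
    (D : Matrix m n R) (hrow : ∀ i, ∑ j, D i j = 0) (hcol : ∀ j, ∑ i, D i j = 0) :
    ∑ i, ∑ j, (r i + c j) * D i j = 0 := by
  simp only [add_mul, sum_add_distrib, ← mul_sum, hrow, mul_zero, zero_add]
  rw [sum_comm]
  simp only [← mul_sum, hcol, mul_zero, sum_const_zero]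

theorem sum_sum_sub_sq_of_sum_sum_mul_eq_zero (X Y : Matrix m n ℝ)
    (h : ∑ i, ∑ j, X i j * Y i j = 0) :
    ∑ i, ∑ j, (X - Y) i j ^ 2 = ∑ i, ∑ j, X i j ^ 2 + ∑ i, ∑ j, Y i j ^ 2 := by
  have hexp : ∀ i j, (X - Y) i j ^ 2 = X i j ^ 2 + Y i j ^ 2 - 2 * (X i j * Y i j) :=
    fun i j => by rw [Matrix.sub_apply]; ring
  simp only [hexp, sum_sub_distrib, sum_add_distrib, ← mul_sum, h, mul_zero, sub_zero]

theorem eq_zero_of_sum_sum_sq_eq_zero (M : Matrix m n ℝ) (h : ∑ i, ∑ j, M i j ^ 2 = 0) :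
    M = 0 := by
  have hrows := (Fintype.sum_eq_zero_iff_of_nonneg fun _ => sum_nonneg fun _ _ => sq_nonneg _).1 h
  ext i j
  have hij := congrFun ((Fintype.sum_eq_zero_iff_of_nonneg fun _ => sq_nonneg _).1
    (congrFun hrows i)) j
  exact pow_eq_zero_iff two_ne_zero |>.1 hij

end Orthogonality

section Jmat

variable {n : ℕ}

theorem Jmat_mul_apply (M : Matrix (Fin n) (Fin n) ℝ) (i j : Fin n) :
    (Jmat n * M) i j = (∑ k, M k j) / n := by
  simp only [mul_apply, Jmat, of_apply, sum_div]
  exact sum_congr rfl fun _ _ => by ring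

theorem mul_Jmat_apply (M : Matrix (Fin n) (Fin n) ℝ) (i j : Fin n) :
    (M * Jmat n) i j = (∑ k, M i k) / n := by
  simp only [mul_apply, Jmat, of_apply, sum_div]
  exact sum_congr rfl fun _ _ => by ring

theorem Jmat_mulVec_one : Jmat n *ᵥ 1 = 1 := by
  rcases Nat.eq_zero_or_pos n with rfl | hn
  · exact Subsingleton.elim _ _
  · ext i
    simp [mulVec, dotProduct, Jmat, hn.ne']

theorem one_vecMul_Jmat : 1 ᵥ* Jmat n = 1 := by
  rcases Nat.eq_zero_or_pos n with rfl | hn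
  · exact Subsingleton.elim _ _
  · ext j
    simp [vecMul, dotProduct, Jmat, hn.ne']

theorem Jmat_mul_add_mul_Jmat_apply (X Y : Matrix (Fin n) (Fin n) ℝ) (i j : Fin n) :
    (Jmat n * X + Y * Jmat n) i j = (∑ k, Y i k) / n + (∑ k, X k j) / n := by
  rw [Matrix.add_apply, Jmat_mul_apply, mul_Jmat_apply, add_comm]

theorem one_sub_Jmat_mulVec_one : (1 - Jmat n) *ᵥ 1 = 0 := by
  rw [sub_mulVec, one_mulVec, Jmat_mulVec_one, sub_self]

theorem one_vecMul_one_sub_Jmat : 1 ᵥ* (1 - Jmat n) = 0 := by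
  rw [vecMul_sub, vecMul_one, one_vecMul_Jmat, sub_self]

noncomputable def unitSumProj (A : Matrix (Fin n) (Fin n) ℝ) : Matrix (Fin n) (Fin n) ℝ :=
  (1 - Jmat n) * A * (1 - Jmat n) + Jmat n

theorem unitSumProj_mulVec_one (A : Matrix (Fin n) (Fin n) ℝ) : unitSumProj A *ᵥ 1 = 1 := by
  rw [unitSumProj, add_mulVec, ← mulVec_mulVec, one_sub_Jmat_mulVec_one, mulVec_zero, zero_add,
    Jmat_mulVec_one]

theorem one_vecMul_unitSumProj (A : Matrix (Fin n) (Fin n) ℝ) : 1 ᵥ* unitSumProj A = 1 := by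
  rw [unitSumProj, vecMul_add, Matrix.mul_assoc, ← vecMul_vecMul, one_vecMul_one_sub_Jmat,
    zero_vecMul, zero_add, one_vecMul_Jmat]

theorem sub_unitSumProj (A : Matrix (Fin n) (Fin n) ℝ) :
    A - unitSumProj A = Jmat n * (A - A * Jmat n) + (A - 1) * Jmat n := by
  rw [unitSumProj]
  noncomm_ring

end Jmat

/-- For any real `n × n` matrix `A`, the matrix `B* = (I - J)·A·(I - J) + J` has all row
and column sums equal to `1`, and is the unique closest such matrix to `A` in the
Frobenius norm. -/
theorem stmt3 (n : ℕ) (A B : Matrix (Fin n) (Fin n) ℝ)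
    (hB : B = (1 - Jmat n) * A * (1 - Jmat n) + Jmat n) :
    (∀ i, ∑ j, B i j = 1) ∧ (∀ j, ∑ i, B i j = 1) ∧
    (∀ C : Matrix (Fin n) (Fin n) ℝ,
      (∀ i, ∑ j, C i j = 1) → (∀ j, ∑ i, C i j = 1) →
      frobNorm (A - B) ≤ frobNorm (A - C) ∧
      (frobNorm (A - B) = frobNorm (A - C) → C = B)) := by
  obtain rfl : B = unitSumProj A := hB
  have hBrow (i : Fin n) : ∑ j, unitSumProj A i j = 1 := by
    simpa [mulVec, dotProduct] using congrFun (unitSumProj_mulVec_one A) i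
  have hBcol (j : Fin n) : ∑ i, unitSumProj A i j = 1 := by
    simpa [vecMul, dotProduct] using congrFun (one_vecMul_unitSumProj A) j
  refine ⟨hBrow, hBcol, fun C hCrow hCcol => ?_⟩
  set B := unitSumProj A
  have horth : ∑ i, ∑ j, (A - B) i j * (C - B) i j = 0 := by
    simp only [show A - B = _ from sub_unitSumProj A, Jmat_mul_add_mul_Jmat_apply]
    refine sum_sum_add_mul_eq_zero _ _ _ (fun i => ?_) (fun j => ?_) <;>
      simp only [Matrix.sub_apply, sum_sub_distrib, hBrow, hBcol, hCrow, hCcol, sub_self]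
  have hpyth : frobNorm (A - C) =
      Real.sqrt (∑ i, ∑ j, (A - B) i j ^ 2 + ∑ i, ∑ j, (C - B) i j ^ 2) := by
    rw [frobNorm, ← sum_sum_sub_sq_of_sum_sum_mul_eq_zero _ _ horth, sub_sub_sub_cancel_right]
  constructor
  · rw [hpyth, frobNorm]
    exact Real.sqrt_le_sqrt (le_add_of_nonneg_right (by positivity))
  · intro h
    rw [hpyth, frobNorm, Real.sqrt_inj (by positivity) (by positivity)] at h
    exact sub_eq_zero.1 (eq_zero_of_sum_sum_sq_eq_zero _ (by linarith))
end

section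
/- (Rado) Let A be an n×n complex matrix whose characteristic polynomial factors as ∏_{i=1}^{n}(t − λ_i). Let 1 ≤ r ≤ n, let Λ = diag(λ_1, ..., λ_r), and let X be an n×r complex matrix satisfying A·X = X·Λ (i.e., the j-th column of X is an eigenvector of A for λ_j). Then for every r×n complex matrix C, the characteristic polynomials satisfy charpoly(A + X·C) · charpoly(Λ) = charpoly(A) · charpoly(Λ + C·X); equivalently, the eigenvalues of A + X·C are γ_1, ..., γ_r, λ_{r+1}, ..., λ_n, where γ_1, ..., γ_r are the eigenvalues of Λ + C·X. -/
open Polynomial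

lemma rado_key {K : Type*} [Field K] {n r : ℕ}
    (P : Matrix (Fin n) (Fin n) K) (Q : Matrix (Fin r) (Fin r) K)
    (Xm : Matrix (Fin n) (Fin r) K) (Cm : Matrix (Fin r) (Fin n) K)
    (hPQ : P * Xm = Xm * Q) (hP : IsUnit P.det) (hQ : IsUnit Q.det) :
    (P - Xm * Cm).det * Q.det = P.det * (Q - Cm * Xm).det := by
  have hPinv : P * P⁻¹ = 1 := Matrix.mul_nonsing_inv P hP
  have hQinv : Q * Q⁻¹ = 1 := Matrix.mul_nonsing_inv Q hQ
  have hPinv' : P⁻¹ * P = 1 := Matrix.nonsing_inv_mul P hP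
  have hXQ : Xm * Q⁻¹ = P⁻¹ * Xm := by
    have h1 : P * (Xm * Q⁻¹) = Xm := by
      rw [← Matrix.mul_assoc, hPQ, Matrix.mul_assoc, hQinv, Matrix.mul_one]
    calc Xm * Q⁻¹ = (P⁻¹ * P) * (Xm * Q⁻¹) := by rw [hPinv', Matrix.one_mul]
      _ = P⁻¹ * (P * (Xm * Q⁻¹)) := by rw [Matrix.mul_assoc]
      _ = P⁻¹ * Xm := by rw [h1]
  have h2 : P - Xm * Cm = P * (1 - P⁻¹ * (Xm * Cm)) := by
    rw [Matrix.mul_sub, Matrix.mul_one, ← Matrix.mul_assoc, hPinv, Matrix.one_mul]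
  have h3 : (1 - P⁻¹ * (Xm * Cm)).det = (1 - Cm * (P⁻¹ * Xm)).det := by
    rw [← Matrix.mul_assoc, Matrix.det_one_sub_mul_comm]
  have h4 : (1 : Matrix (Fin r) (Fin r) K) - Cm * (P⁻¹ * Xm) = (Q - Cm * Xm) * Q⁻¹ := by
    rw [Matrix.sub_mul, hQinv, ← hXQ, Matrix.mul_assoc]
  have hdetQinv : Q⁻¹.det * Q.det = 1 := by
    rw [Matrix.det_nonsing_inv, Ring.inverse_mul_cancel _ hQ]
  rw [h2, Matrix.det_mul, h3, h4, Matrix.det_mul]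
  rw [mul_assoc, mul_assoc, hdetQinv, mul_one]

/-- **Rado's theorem.** Let `A` be an `n × n` complex matrix whose characteristic
polynomial factors as `∏ i, (t - λ i)`.  Let `r ≤ n`, let `Λ = diag(λ_1, …, λ_r)`, and
let `X` be an `n × r` matrix with `A * X = X * Λ`.  Then for every `r × n` matrix `C`,
`charpoly (A + X*C) * charpoly Λ = charpoly A * charpoly (Λ + C*X)`; i.e. the
eigenvalues of `A + X*C` are the eigenvalues of `Λ + C*X` together with
`λ_{r+1}, …, λ_n`. -/
theorem stmt4 (n r : ℕ) (hr : r ≤ n) (A : Matrix (Fin n) (Fin n) ℂ) (lam : Fin n → ℂ)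
    (hfact : A.charpoly = ∏ i, (X - C (lam i)))
    (Xm : Matrix (Fin n) (Fin r) ℂ)
    (hX : A * Xm = Xm * Matrix.diagonal (fun i : Fin r => lam (Fin.castLE hr i))) :
    ∀ Cm : Matrix (Fin r) (Fin n) ℂ,
      (A + Xm * Cm).charpoly *
          (Matrix.diagonal (fun i : Fin r => lam (Fin.castLE hr i))).charpoly =
        A.charpoly *
          (Matrix.diagonal (fun i : Fin r => lam (Fin.castLE hr i)) + Cm * Xm).charpoly := by
  intro Cm
  set Λ := Matrix.diagonal (fun i : Fin r => lam (Fin.castLE hr i)) with hΛ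
  -- work in the fraction field K = RatFunc ℂ
  let K := RatFunc ℂ
  let φ : ℂ[X] →+* K := algebraMap ℂ[X] K
  have hφinj : Function.Injective φ := IsFractionRing.injective ℂ[X] K
  apply hφinj
  rw [map_mul, map_mul]
  -- express φ (charpoly M) as determinant of mapped charmatrix
  have hchar : ∀ (m : ℕ) (M : Matrix (Fin m) (Fin m) ℂ),
      φ M.charpoly = ((Matrix.charmatrix M).map φ).det := by
    intro m M
    rw [Matrix.charpoly, RingHom.map_det, RingHom.mapMatrix_apply]
  rw [hchar, hchar, hchar, hchar]
  -- key matrices over K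
  let t : K := φ X
  let f : ℂ →+* K := φ.comp Polynomial.C
  have hcm : ∀ (m : ℕ) (M : Matrix (Fin m) (Fin m) ℂ),
      (Matrix.charmatrix M).map φ = Matrix.scalar (Fin m) t - M.map f := by
    intro m M
    ext i j
    by_cases h : i = j <;>
      simp [Matrix.charmatrix, Matrix.scalar, h, Matrix.diagonal, f, t, Matrix.sub_apply]
  have hmapmul : ∀ {p q s : ℕ} (M : Matrix (Fin p) (Fin q) ℂ) (N : Matrix (Fin q) (Fin s) ℂ),
      (M * N).map f = M.map f * N.map f := by
    intro p q s M N
    ext i j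
    simp [Matrix.mul_apply, map_sum]
  have hmapadd : ∀ {p : ℕ} (M N : Matrix (Fin p) (Fin p) ℂ),
      (M + N).map f = M.map f + N.map f := fun M N => Matrix.map_add _ (map_add f) M N
  -- set up P, Q
  set P : Matrix (Fin n) (Fin n) K := Matrix.scalar (Fin n) t - A.map f with hP
  set Q : Matrix (Fin r) (Fin r) K := Matrix.scalar (Fin r) t - Λ.map f with hQ
  have e1 : (Matrix.charmatrix (A + Xm * Cm)).map φ = P - Xm.map f * Cm.map f := by
    rw [hcm, hmapadd, hmapmul, hP]; abel
  have e2 : (Matrix.charmatrix (Λ + Cm * Xm)).map φ = Q - Cm.map f * Xm.map f := by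
    rw [hcm, hmapadd, hmapmul, hQ]; abel
  have e3 : (Matrix.charmatrix A).map φ = P := (hcm n A).trans hP.symm
  have e4 : (Matrix.charmatrix Λ).map φ = Q := (hcm r Λ).trans hQ.symm
  rw [e1, e2, e3, e4]
  -- intertwining relation
  have hPQ : P * Xm.map f = Xm.map f * Q := by
    rw [hP, hQ, Matrix.sub_mul, Matrix.mul_sub, ← hmapmul, ← hmapmul, hX]
    congr 1
    ext i j
    simp [Matrix.scalar, Matrix.diagonal_mul, Matrix.mul_diagonal, mul_comm]
  -- invertibility: determinants are images of charpolys, which are nonzero (monic)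
  have hdetP : IsUnit P.det := by
    rw [← e3, ← RingHom.mapMatrix_apply, ← RingHom.map_det]
    have : (A.charmatrix).det = A.charpoly := rfl
    rw [this]
    exact (isUnit_iff_ne_zero).mpr (fun h => (Matrix.charpoly_monic A).ne_zero (hφinj (by simpa using h)))
  have hdetQ : IsUnit Q.det := by
    rw [← e4, ← RingHom.mapMatrix_apply, ← RingHom.map_det]
    have : (Λ.charmatrix).det = Λ.charpoly := rfl
    rw [this]
    exact (isUnit_iff_ne_zero).mpr (fun h => (Matrix.charpoly_monic Λ).ne_zero (hφinj (by simpa using h)))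
  exact rado_key P Q (Xm.map f) (Cm.map f) hPQ hdetP hdetQ
end

section
/- Let A be a real n×n matrix each of whose row sums equals r, and let ε be any real number. Then the matrix S = A + ε·J_n has every row sum equal to r + ε, and its characteristic polynomial satisfies charpoly(S)·(t − r) = charpoly(A)·(t − (r + ε)); that is, the eigenvalue multiset of S is obtained from that of A by replacing one occurrence of the eigenvalue r by r + ε. Moreover, if in addition every column sum of A equals r, then every column sum of S equals r + ε. -/
/-!
If `A u = r u`, then `(t - A) u = (t - r) u`, so
`(t - r) • (t - A - u vᵀ) = (t - A) * ((t - r) - u vᵀ)`. Taking determinants, using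
`det (s - u vᵀ) = s ^ (n - 1) * (s - v ⬝ u)`, and cancelling the monic factor `(t - r) ^ n`
yields `charpoly (A + u vᵀ) * (t - r) = charpoly A * (t - (r + v ⬝ u))` over any commutative
ring. For the theorem take `u = 1` and `v = ε / n`, so that `u vᵀ = ε • J_n` and `v ⬝ u = ε`.
-/

open Polynomial

namespace Matrix

variable {m R : Type*} [Fintype m] [DecidableEq m] [CommRing R]

theorem det_scalar_sub_vecMulVec_mul (w : R) (u v : m → R) :
    (scalar m w - vecMulVec u v).det * w = w ^ Fintype.card m * (w - v ⬝ᵥ u) := by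
  rw [← eval_charpoly, charpoly_vecMulVec, dotProduct_comm]
  rcases isEmpty_or_nonempty m with hm | hm
  · simp
  · obtain ⟨k, hk⟩ := Nat.exists_eq_add_of_le' (Fintype.card_pos (α := m))
    simp only [eval_sub, eval_pow, eval_X, eval_smul, smul_eq_mul, hk, Nat.add_sub_cancel]
    ring

theorem det_sub_vecMulVec_mul_of_mulVec_eq_smul {N : Matrix m m R} {u : m → R} {w : R}
    (hw : IsLeftRegular w) (hN : N *ᵥ u = w • u) (v : m → R) :
    (N - vecMulVec u v).det * w = N.det * (w - v ⬝ᵥ u) := by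
  have hfactor : w • (N - vecMulVec u v) = N * (scalar m w - vecMulVec u v) := by
    rw [Matrix.mul_sub, mul_vecMulVec, hN, smul_vecMulVec, smul_sub, scalar_apply,
      ← smul_one_eq_diagonal, Matrix.mul_smul, Matrix.mul_one]
  apply hw.pow (Fintype.card m)
  calc w ^ Fintype.card m * ((N - vecMulVec u v).det * w)
      = N.det * ((scalar m w - vecMulVec u v).det * w) := by
        rw [← mul_assoc, ← det_smul, hfactor, det_mul, mul_assoc]
    _ = w ^ Fintype.card m * (N.det * (w - v ⬝ᵥ u)) := by
        rw [det_scalar_sub_vecMulVec_mul]; ring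

theorem charmatrix_mulVec_of_mulVec_eq_smul {A : Matrix m m R} {u : m → R} {r : R}
    (hu : A *ᵥ u = r • u) : charmatrix A *ᵥ (C ∘ u) = (X - C r) • (C ∘ u) := by
  funext i
  simp only [charmatrix, sub_mulVec, Pi.sub_apply, scalar_apply, RingHom.mapMatrix_apply]
  rw [← RingHom.map_mulVec, hu]
  simp only [diagonal_const_mulVec, Pi.smul_apply, Function.comp_apply, smul_eq_mul, X_mul_C,
    map_mul]
  ring

theorem charmatrix_add_vecMulVec (A : Matrix m m R) (u v : m → R) :
    charmatrix (A + vecMulVec u v) = charmatrix A - vecMulVec (C ∘ u) (C ∘ v) := by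
  ext i j : 1
  simp only [charmatrix_apply, add_apply, sub_apply, vecMulVec_apply, Function.comp_apply,
    map_add, map_mul]
  ring

theorem charpoly_add_vecMulVec_mul_X_sub_C {A : Matrix m m R} {u : m → R} {r : R}
    (hu : A *ᵥ u = r • u) (v : m → R) :
    (A + vecMulVec u v).charpoly * (X - C r) = A.charpoly * (X - C (r + v ⬝ᵥ u)) := by
  have hdot : (C ∘ v) ⬝ᵥ (C ∘ u) = C (v ⬝ᵥ u) := (RingHom.map_dotProduct C v u).symm
  rw [charpoly, charmatrix_add_vecMulVec, det_sub_vecMulVec_mul_of_mulVec_eq_smul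
    (monic_X_sub_C r).isRegular.left (charmatrix_mulVec_of_mulVec_eq_smul hu), hdot, C_add,
    charpoly, sub_sub]

end Matrix

open Matrix

theorem smul_Jmat_apply (n : ℕ) (ε : ℝ) (i j : Fin n) : (ε • Jmat n) i j = ε / n := by
  simp [Jmat, div_eq_mul_inv]

theorem smul_Jmat_eq_vecMulVec (n : ℕ) (ε : ℝ) : ε • Jmat n = vecMulVec 1 fun _ => ε / n := by
  ext i j
  rw [smul_Jmat_apply, vecMulVec_apply, Pi.one_apply, one_mul]

theorem sum_div_natCast_fin {n : ℕ} (hn : n ≠ 0) (ε : ℝ) : ∑ _ : Fin n, ε / n = ε := by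
  rw [Finset.sum_const, Finset.card_univ, Fintype.card_fin, nsmul_eq_mul,
    mul_div_cancel₀ _ (Nat.cast_ne_zero.mpr hn)]

/-- Let `A` be a real `n × n` matrix (`n ≥ 1`) whose row sums all equal `r`, and let `ε`
be real.  Then `S = A + ε·J_n` has every row sum equal to `r + ε`, its characteristic
polynomial satisfies `charpoly S * (t - r) = charpoly A * (t - (r + ε))`, and if moreover
every column sum of `A` equals `r`, then every column sum of `S` equals `r + ε`. -/
theorem stmt5 (n : ℕ) (hn : 0 < n) (r ε : ℝ) (A : Matrix (Fin n) (Fin n) ℝ)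
    (hrow : ∀ i, ∑ j, A i j = r) :
    (∀ i, ∑ j, (A + ε • Jmat n) i j = r + ε) ∧
    (A + ε • Jmat n).charpoly * (X - C r) = A.charpoly * (X - C (r + ε)) ∧
    ((∀ j, ∑ i, A i j = r) → ∀ j, ∑ i, (A + ε • Jmat n) i j = r + ε) := by
  have hsum := sum_div_natCast_fin hn.ne' ε
  have hone : A *ᵥ 1 = r • 1 := by
    funext i
    simp only [mulVec, dotProduct, Pi.one_apply, mul_one, hrow, Pi.smul_apply, smul_eq_mul]
  refine ⟨fun i => ?_, ?_, fun hcol j => ?_⟩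
  · simp only [Matrix.add_apply, Finset.sum_add_distrib, smul_Jmat_apply, hrow, hsum]
  · rw [smul_Jmat_eq_vecMulVec, charpoly_add_vecMulVec_mul_X_sub_C hone]
    simp only [dotProduct_one, hsum]
  · simp only [Matrix.add_apply, Finset.sum_add_distrib, smul_Jmat_apply, hcol, hsum]
end

section
/- Let A be a real n×n matrix each of whose row sums and column sums equals r (A is not assumed nonnegative). Then there exists a real number k ≥ 0 such that for all ε ≥ k, the matrix S = A + ε·J_n is entrywise nonnegative, has every row sum and every column sum equal to r + ε, and satisfies charpoly(S)·(t − r) = charpoly(A)·(t − (r + ε)). -/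
open Polynomial

lemma charpoly_key (n : ℕ) (hn : 0 < n) (r ε : ℝ) (A : Matrix (Fin n) (Fin n) ℝ)
    (hrow : ∀ i, ∑ j, A i j = r) :
    (A + ε • Jmat n).charpoly * (X - C r) = A.charpoly * (X - C (r + ε)) := by
  haveI : NeZero n := ⟨hn.ne'⟩
  have hn' : (n : ℝ) ≠ 0 := Nat.cast_ne_zero.mpr hn.ne'
  set S := A + ε • Jmat n with hS
  have hSapp : ∀ i j, S i j = A i j + ε / n := by
    intro i j
    simp [hS, Jmat]
    ring
  have hcmS : ∀ i j, Matrix.charmatrix S i j = Matrix.charmatrix A i j - C (ε / n) := by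
    intro i j
    simp [Matrix.charmatrix_apply, hSapp, sub_sub]
  have hrowA : ∀ i, ∑ k, Matrix.charmatrix A i k = X - C r := by
    intro i
    simp only [Matrix.charmatrix_apply]
    rw [Finset.sum_sub_distrib, ← map_sum, hrow i]
    congr 1
    simp [Matrix.diagonal_apply]
  have hrowS : ∀ i, ∑ k, Matrix.charmatrix S i k = X - C (r + ε) := by
    intro i
    simp only [hcmS]
    rw [Finset.sum_sub_distrib, hrowA, Finset.sum_const, Finset.card_univ, Fintype.card_fin,
      nsmul_eq_mul]
    have hC : (n : ℝ[X]) * C (ε / n) = C ε := by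
      rw [← map_natCast (C : ℝ →+* ℝ[X]) n, ← C_mul, mul_div_cancel₀ _ hn']
    rw [hC, map_add]
    ring
  set P : Matrix (Fin n) (Fin n) ℝ[X] :=
    Matrix.of (fun k j => if j = 0 then 1 else if k = j then 1 else 0) with hP
  set D : Matrix (Fin n) (Fin n) ℝ[X] :=
    Matrix.of (fun i j => if j = 0 then 1 else Matrix.charmatrix A i j) with hD
  set dr : Matrix (Fin n) (Fin n) ℝ[X] :=
    Matrix.diagonal (fun j => if j = 0 then X - C r else 1) with hdr
  set U : Matrix (Fin n) (Fin n) ℝ[X] :=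
    Matrix.of (fun i j => if i = j then 1 else if i = 0 then -C (ε / n) else 0) with hU
  set d2 : Matrix (Fin n) (Fin n) ℝ[X] :=
    Matrix.diagonal (fun j => if j = 0 then X - C (r + ε) else 1) with hd2
  have hPk0 : ∀ k : Fin n, P k 0 = 1 := by intro k; simp [hP]
  have hPkj : ∀ (k j : Fin n), j ≠ 0 → P k j = if k = j then 1 else 0 := by
    intro k j hj; simp [hP, hj]
  have hDk0 : ∀ i : Fin n, D i 0 = 1 := by intro i; simp [hD]
  have hDkj : ∀ (i j : Fin n), j ≠ 0 → D i j = Matrix.charmatrix A i j := by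
    intro i j hj; simp [hD, hj]
  -- identity 1 : charmatrix A * P = D * dr
  have hid1 : Matrix.charmatrix A * P = D * dr := by
    apply Matrix.ext
    intro i j
    rw [Matrix.mul_apply, Matrix.mul_apply]
    by_cases hj : j = 0
    · subst hj
      have e1 : ∑ k, Matrix.charmatrix A i k * P k 0 = X - C r := by
        calc ∑ k, Matrix.charmatrix A i k * P k 0 = ∑ k, Matrix.charmatrix A i k :=
              Finset.sum_congr rfl (fun k _ => by rw [hPk0 k, mul_one])
          _ = X - C r := hrowA i
      have e2 : ∑ k, D i k * dr k 0 = X - C r := by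
        rw [Finset.sum_eq_single 0]
        · rw [hDk0]; simp [hdr]
        · intro b _ hb
          rw [hdr, Matrix.diagonal_apply_ne _ hb, mul_zero]
        · simp
      rw [e1, e2]
    · have e1 : ∑ k, Matrix.charmatrix A i k * P k j = Matrix.charmatrix A i j := by
        rw [Finset.sum_eq_single j]
        · rw [hPkj j j hj, if_pos rfl, mul_one]
        · intro b _ hb
          rw [hPkj b j hj, if_neg hb, mul_zero]
        · simp
      have e2 : ∑ k, D i k * dr k j = Matrix.charmatrix A i j := by
        rw [Finset.sum_eq_single j]
        · rw [hDkj i j hj, hdr, Matrix.diagonal_apply_eq, if_neg hj, mul_one]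
        · intro b _ hb
          rw [hdr, Matrix.diagonal_apply_ne _ hb, mul_zero]
        · simp
      rw [e1, e2]
  -- identity 2 : charmatrix S * P = D * (U * d2)
  have hid2 : Matrix.charmatrix S * P = D * (U * d2) := by
    have hL : ∀ (i j : Fin n), (U * d2) i j =
        if j = 0 then (if i = 0 then X - C (r + ε) else 0)
        else if i = j then 1 else if i = 0 then -C (ε / n) else 0 := by
      intro i j
      rw [Matrix.mul_apply]
      rw [Finset.sum_eq_single j]
      · by_cases hj : j = 0
        · subst hj
          by_cases hi : i = 0 <;> simp [hU, hd2, hi]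
        · by_cases hi : i = j <;> simp [hU, hd2, hi, hj]
      · intro b _ hb
        rw [hd2, Matrix.diagonal_apply_ne _ hb, mul_zero]
      · simp
    apply Matrix.ext
    intro i j
    rw [Matrix.mul_apply, Matrix.mul_apply]
    by_cases hj : j = 0
    · subst hj
      have e1 : ∑ k, Matrix.charmatrix S i k * P k 0 = X - C (r + ε) := by
        calc ∑ k, Matrix.charmatrix S i k * P k 0 = ∑ k, Matrix.charmatrix S i k :=
              Finset.sum_congr rfl (fun k _ => by rw [hPk0 k, mul_one])
          _ = X - C (r + ε) := hrowS i
      have e2 : ∑ k, D i k * (U * d2) k 0 = X - C (r + ε) := by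
        rw [Finset.sum_eq_single 0]
        · rw [hDk0, hL, if_pos rfl, if_pos rfl, one_mul]
        · intro b _ hb
          rw [hL, if_pos rfl, if_neg hb, mul_zero]
        · simp
      rw [e1, e2]
    · have e1 : ∑ k, Matrix.charmatrix S i k * P k j = Matrix.charmatrix S i j := by
        rw [Finset.sum_eq_single j]
        · rw [hPkj j j hj, if_pos rfl, mul_one]
        · intro b _ hb
          rw [hPkj b j hj, if_neg hb, mul_zero]
        · simp
      have e2 : ∑ k, D i k * (U * d2) k j = Matrix.charmatrix S i j := by
        have hsplit : ∀ k : Fin n, D i k * (U * d2) k j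
            = (if k = j then Matrix.charmatrix A i j else 0) +
              (if k = 0 then -C (ε / n) else 0) := by
          intro k
          rw [hL, if_neg hj]
          by_cases h1 : k = j
          · subst h1
            simp [hj, hDkj _ _ hj]
          · by_cases h2 : k = 0
            · subst h2
              simp [h1, hDk0]
            · simp [h1, h2]
        rw [Finset.sum_congr rfl (fun k _ => hsplit k), Finset.sum_add_distrib,
          Finset.sum_ite_eq' Finset.univ j, Finset.sum_ite_eq' Finset.univ (0 : Fin n),
          if_pos (Finset.mem_univ j), if_pos (Finset.mem_univ (0 : Fin n)), hcmS,
          sub_eq_add_neg]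
      rw [e1, e2]
  -- determinants of the auxiliary matrices
  have hdetP : P.det = 1 := by
    rw [Matrix.det_of_lowerTriangular P]
    · simp [hP]
    · intro i j hij
      have hij' : i < j := hij
      have hj0 : j ≠ 0 := by
        intro h
        subst h
        exact absurd hij' (by simp [Fin.not_lt_zero])
      simp [hP, hj0, hij'.ne]
  have hdetU : U.det = 1 := by
    rw [Matrix.det_of_upperTriangular]
    · simp [hU]
    · intro i j hij
      have hi0 : i ≠ 0 := by
        intro h
        subst h
        exact absurd hij (by simp [Fin.not_lt_zero])
      have hij' : i ≠ j := by
        intro h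
        subst h
        exact absurd hij (lt_irrefl _)
      simp [hU, hi0, hij']
  have hdetdr : dr.det = X - C r := by
    rw [hdr, Matrix.det_diagonal, Fintype.prod_ite_eq']
  have hdetd2 : d2.det = X - C (r + ε) := by
    rw [hd2, Matrix.det_diagonal, Fintype.prod_ite_eq']
  have h1 : A.charpoly = D.det * (X - C r) := by
    have h := congrArg Matrix.det hid1
    rw [Matrix.det_mul, Matrix.det_mul, hdetP, mul_one, hdetdr] at h
    exact h
  have h2 : S.charpoly = D.det * (X - C (r + ε)) := by
    have h := congrArg Matrix.det hid2
    rw [Matrix.det_mul, Matrix.det_mul, Matrix.det_mul, hdetP, mul_one, hdetU, hdetd2,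
      one_mul] at h
    exact h
  rw [h1, h2]
  ring

/-- Let `A` be a real `n × n` matrix (`n ≥ 1`, not assumed nonnegative) whose row sums
and column sums all equal `r`.  Then there exists `k ≥ 0` such that for all `ε ≥ k`, the
matrix `S = A + ε·J_n` is entrywise nonnegative, has every row and column sum equal to
`r + ε`, and satisfies `charpoly S * (t - r) = charpoly A * (t - (r + ε))`. -/
theorem stmt6 (n : ℕ) (hn : 0 < n) (r : ℝ) (A : Matrix (Fin n) (Fin n) ℝ)
    (hrow : ∀ i, ∑ j, A i j = r) (hcol : ∀ j, ∑ i, A i j = r) :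
    ∃ k : ℝ, 0 ≤ k ∧ ∀ ε : ℝ, k ≤ ε →
      (∀ i j, 0 ≤ (A + ε • Jmat n) i j) ∧
      (∀ i, ∑ j, (A + ε • Jmat n) i j = r + ε) ∧
      (∀ j, ∑ i, (A + ε • Jmat n) i j = r + ε) ∧
      (A + ε • Jmat n).charpoly * (X - C r) = A.charpoly * (X - C (r + ε)) := by
  have hn' : (n : ℝ) ≠ 0 := Nat.cast_ne_zero.mpr hn.ne'
  have hnpos : (0 : ℝ) < n := Nat.cast_pos.mpr hn
  refine ⟨∑ i, ∑ j, (n : ℝ) * |A i j|, ?_, ?_⟩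
  · positivity
  · intro ε hε
    have happ : ∀ i j, (A + ε • Jmat n) i j = A i j + ε / n := by
      intro i j
      simp [Jmat]
      ring
    refine ⟨?_, ?_, ?_, charpoly_key n hn r ε A hrow⟩
    · intro i j
      rw [happ]
      have hk1 : (n : ℝ) * |A i j| ≤ ∑ i, ∑ j, (n : ℝ) * |A i j| := by
        calc (n : ℝ) * |A i j| ≤ ∑ j', (n : ℝ) * |A i j'| :=
              Finset.single_le_sum (f := fun j' => (n : ℝ) * |A i j'|)
                (fun _ _ => by positivity) (Finset.mem_univ j)
          _ ≤ ∑ i', ∑ j', (n : ℝ) * |A i' j'| :=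
              Finset.single_le_sum (f := fun i' => ∑ j', (n : ℝ) * |A i' j'|)
                (fun _ _ => by positivity) (Finset.mem_univ i)
      have habs : |A i j| ≤ ε / n := by
        rw [le_div_iff₀ hnpos]
        calc |A i j| * n = n * |A i j| := by ring
          _ ≤ ∑ i, ∑ j, (n : ℝ) * |A i j| := hk1
          _ ≤ ε := hε
      linarith [neg_abs_le (A i j)]
    · intro i
      simp only [happ]
      rw [Finset.sum_add_distrib, hrow, Finset.sum_const, Finset.card_univ, Fintype.card_fin,
        nsmul_eq_mul, mul_div_cancel₀ _ hn']
    · intro j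
      simp only [happ]
      rw [Finset.sum_add_distrib, hcol, Finset.sum_const, Finset.card_univ, Fintype.card_fin,
        nsmul_eq_mul, mul_div_cancel₀ _ hn']
end

section
/- Let A be an entrywise nonnegative real n×n matrix and let r be its Perron eigenvalue, i.e., r is an eigenvalue of A and r ≥ |λ| for every complex eigenvalue λ of A. Then there exists a real number k_A ≥ −r such that for every real ε ≥ k_A there exists an entrywise nonnegative real n×n matrix D with every row sum and every column sum equal to r + ε whose characteristic polynomial satisfies charpoly(D)·(t − r) = charpoly(A)·(t − (r + ε)); that is, the eigenvalue multiset of D is obtained from that of A by replacing one occurrence of r by r + ε. -/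
/-!
Perturb `A` to the positive matrices `A + J / (k + 1)`. A positive matrix `P` has a positive
eigenvector (Collatz–Wielandt: maximise `s` over the pairs `(s, x)` with `x` in the simplex and
`s • x ≤ P x`), so a diagonal similarity turns it into a nonnegative matrix with constant row sums
`t`, and comparing with an eigenvector of `A` for `r` gives `r ≤ t`. A limit point of these matrices
is nonnegative, has constant row sums `t ≥ r` and the characteristic polynomial of `A`; as `t` is
then a real eigenvalue of `A`, `t = r`. Finally, adding `1 wᵀ` with `w ≥ 0` chosen to equalise the
column sums moves the eigenvalue `r` of the eigenvector `1` to `r + ∑ w` and keeps the others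
(Brauer's theorem).
-/

open Polynomial Matrix Filter Topology

theorem exists_gt_forall_mul_lt {ι : Type*} [Finite ι] {t : ℝ} {y b : ι → ℝ}
    (h : ∀ i, t * y i < b i) :
    ∃ s > t, ∀ i, s * y i < b i := by
  have hnhds : ∀ᶠ s in 𝓝 t, ∀ i, s * y i < b i := eventually_all.2 fun i =>
    (continuous_mul_const (y i)).continuousAt.eventually_lt continuousAt_const (h i)
  obtain ⟨s, hs, hts⟩ := ((eventually_nhdsWithin_of_eventually_nhds hnhds).and
    (self_mem_nhdsWithin (s := Set.Ioi t))).exists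
  exact ⟨s, hts, hs⟩

namespace Matrix

variable {ι : Type*} [Fintype ι]

theorem abs_mulVec_le_mulVec_abs {A P : Matrix ι ι ℝ} (hAP : ∀ i j, |A i j| ≤ P i j)
    (x : ι → ℝ) (i : ι) : |(A *ᵥ x) i| ≤ (P *ᵥ fun j => |x j|) i :=
  calc |(A *ᵥ x) i| ≤ ∑ j, |A i j * x j| := Finset.abs_sum_le_sum_abs _ _
    _ ≤ (P *ᵥ fun j => |x j|) i := Finset.sum_le_sum fun j _ => by
      rw [abs_mul]; exact mul_le_mul_of_nonneg_right (hAP i j) (abs_nonneg _)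

theorem le_of_mul_le_mulVec_of_mulVec_le_mul {P : Matrix ι ι ℝ} (hP : ∀ i j, 0 ≤ P i j)
    {u : ι → ℝ} (hu : ∀ i, 0 ≤ u i) (hu0 : u ≠ 0) {s : ℝ} (hs : ∀ i, s * u i ≤ (P *ᵥ u) i)
    {y : ι → ℝ} (hy : ∀ i, 0 < y i) {t : ℝ} (ht : ∀ i, (P *ᵥ y) i ≤ t * y i) : s ≤ t := by
  obtain ⟨k, hk⟩ := Function.ne_iff.1 hu0
  have : Nonempty ι := ⟨k⟩
  obtain ⟨i₀, hi₀⟩ := Finite.exists_max fun i => u i / y i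
  set c := u i₀ / y i₀
  have hle : ∀ j, u j ≤ c * y j := fun j => (div_le_iff₀ (hy j)).1 (hi₀ j)
  have hui₀ : u i₀ = c * y i₀ := (div_mul_cancel₀ _ (hy i₀).ne').symm
  have hc : 0 < c := (div_pos ((hu k).lt_of_ne' hk) (hy k)).trans_le (hi₀ k)
  have hpos : 0 < u i₀ := hui₀ ▸ mul_pos hc (hy i₀)
  refine le_of_mul_le_mul_right ?_ hpos
  calc s * u i₀ ≤ (P *ᵥ u) i₀ := hs i₀
    _ ≤ (P *ᵥ (c • y)) i₀ := Finset.sum_le_sum fun j _ =>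
        mul_le_mul_of_nonneg_left (hle j) (hP i₀ j)
    _ = c * (P *ᵥ y) i₀ := by rw [mulVec_smul, Pi.smul_apply, smul_eq_mul]
    _ ≤ c * (t * y i₀) := mul_le_mul_of_nonneg_left (ht i₀) hc.le
    _ = t * u i₀ := by rw [hui₀]; ring

theorem mulVec_pos {P : Matrix ι ι ℝ} (hP : ∀ i j, 0 < P i j) {z : ι → ℝ}
    (hz : ∀ i, 0 ≤ z i) (hz0 : z ≠ 0) (i : ι) : 0 < (P *ᵥ z) i := by
  obtain ⟨k, hk⟩ := Function.ne_iff.1 hz0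
  exact Finset.sum_pos' (fun j _ => mul_nonneg (hP i j).le (hz j))
    ⟨k, Finset.mem_univ k, mul_pos (hP i k) ((hz k).lt_of_ne' hk)⟩

theorem mulVec_one_apply_le_sum {P : Matrix ι ι ℝ} (hP : ∀ i j, 0 ≤ P i j) (i : ι) :
    (P *ᵥ 1) i ≤ ∑ i, ∑ j, P i j := by
  simpa [mulVec, dotProduct] using
    Finset.single_le_sum (fun i _ => Finset.sum_nonneg fun j _ => hP i j) (Finset.mem_univ i)

def collatzWielandtSet (P : Matrix ι ι ℝ) : Set (ℝ × (ι → ℝ)) :=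
  {p | 0 ≤ p.1 ∧ p.2 ∈ stdSimplex ℝ ι ∧ ∀ i, p.1 * p.2 i ≤ (P *ᵥ p.2) i}

theorem ne_zero_of_mem_stdSimplex {x : ι → ℝ} (hx : x ∈ stdSimplex ℝ ι) : x ≠ 0 := by
  rintro rfl
  simpa using hx.2

theorem isCompact_collatzWielandtSet {P : Matrix ι ι ℝ} (hP : ∀ i j, 0 ≤ P i j) :
    IsCompact (collatzWielandtSet P) := by
  set c := ∑ i, ∑ j, P i j
  have hrow : ∀ i, (P *ᵥ 1) i ≤ c * (1 : ι → ℝ) i := fun i => by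
    simpa using mulVec_one_apply_le_sum hP i
  refine ((isCompact_Icc (a := 0) (b := c)).prod (isCompact_stdSimplex ℝ ι)).of_isClosed_subset
    ?_ ?_
  · simp only [collatzWielandtSet, Set.ofPred_and, Set.ofPred_forall]
    exact (isClosed_le continuous_const continuous_fst).inter
      (((isClosed_stdSimplex ℝ ι).preimage continuous_snd).inter
        (isClosed_iInter fun i => isClosed_le (by fun_prop) (by fun_prop)))
  · rintro ⟨s, x⟩ ⟨hs, hx, hsx⟩
    exact ⟨⟨hs, le_of_mul_le_mulVec_of_mulVec_le_mul hP hx.1 (ne_zero_of_mem_stdSimplex hx) hsx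
      (fun _ => one_pos) hrow⟩, hx⟩

theorem inv_sum_smul_mem_stdSimplex {y : ι → ℝ} (hy : ∀ i, 0 < y i) [Nonempty ι] :
    (∑ i, y i)⁻¹ • y ∈ stdSimplex ℝ ι := by
  have hsum : 0 < ∑ i, y i := Finset.sum_pos (fun i _ => hy i) Finset.univ_nonempty
  refine ⟨fun i => smul_nonneg (inv_nonneg.2 hsum.le) (hy i).le, ?_⟩
  simp only [Pi.smul_apply, smul_eq_mul, ← Finset.mul_sum, inv_mul_cancel₀ hsum.ne']

theorem exists_pos_eigenvector_of_pos [Nonempty ι] {P : Matrix ι ι ℝ} (hP : ∀ i j, 0 < P i j) :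
    ∃ t : ℝ, ∃ y : ι → ℝ, (∀ i, 0 < y i) ∧ P *ᵥ y = t • y := by
  classical
  have hmem : ((0 : ℝ), Pi.single (Classical.arbitrary ι) 1) ∈ collatzWielandtSet P :=
    ⟨le_rfl, single_mem_stdSimplex ℝ _, fun i => by simp [(hP _ _).le]⟩
  obtain ⟨⟨t, x⟩, ⟨ht, hx, hsub⟩, hmax⟩ :=
    (isCompact_collatzWielandtSet fun i j => (hP i j).le).exists_isMaxOn ⟨_, hmem⟩
      continuous_fst.continuousOn
  have hPx := mulVec_pos hP hx.1 (ne_zero_of_mem_stdSimplex hx)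
  have heig : P *ᵥ x = t • x := by
    by_contra hne
    have hgap := mulVec_pos hP (z := P *ᵥ x - t • x) (fun i => by simpa using hsub i)
      (sub_ne_zero.2 hne)
    simp only [mulVec_sub, mulVec_smul, Pi.sub_apply, Pi.smul_apply, smul_eq_mul,
      sub_pos] at hgap
    obtain ⟨s, hts, hs⟩ := exists_gt_forall_mul_lt hgap
    have hmem' : (s, (∑ i, (P *ᵥ x) i)⁻¹ • (P *ᵥ x)) ∈ collatzWielandtSet P := by
      refine ⟨ht.trans hts.le, inv_sum_smul_mem_stdSimplex hPx, fun i => ?_⟩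
      simp only [mulVec_smul, Pi.smul_apply, smul_eq_mul, mul_left_comm s]
      exact mul_le_mul_of_nonneg_left (hs i).le
        (inv_nonneg.2 (Finset.sum_nonneg fun j _ => (hPx j).le))
    exact not_le.2 hts (hmax hmem')
  refine ⟨t, x, fun i => pos_of_mul_pos_right ?_ ht, heig⟩
  simpa [heig] using hPx i

variable [DecidableEq ι]

theorem isRoot_charpoly_iff_exists_mulVec_eq_smul {K : Type*} [Field K] (M : Matrix ι ι K)
    (t : K) : M.charpoly.IsRoot t ↔ ∃ x ≠ 0, M *ᵥ x = t • x := by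
  have hscalar : ∀ x : ι → K, scalar ι t *ᵥ x = t • x := fun x => by
    rw [scalar_apply, ← smul_one_eq_diagonal, smul_mulVec, one_mulVec]
  simp_rw [IsRoot, eval_charpoly, ← exists_mulVec_eq_zero_iff, sub_mulVec, hscalar, sub_eq_zero,
    eq_comm]

theorem exists_rowSum_eq_charpoly_eq_of_pos_eigenvector {P : Matrix ι ι ℝ}
    (hP : ∀ i j, 0 ≤ P i j) {y : ι → ℝ} (hy : ∀ i, 0 < y i) {t : ℝ} (hyt : P *ᵥ y = t • y) :
    ∃ B : Matrix ι ι ℝ, (∀ i j, 0 ≤ B i j) ∧ (∀ i, ∑ j, B i j = t) ∧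
      B.charpoly = P.charpoly := by
  have hentry : ∀ i j, (diagonal y⁻¹ * P * diagonal y) i j = (y i)⁻¹ * P i j * y j := by
    simp [diagonal_mul, mul_diagonal]
  refine ⟨diagonal y⁻¹ * P * diagonal y, fun i j => ?_, fun i => ?_, ?_⟩
  · rw [hentry]
    exact mul_nonneg (mul_nonneg (inv_nonneg.2 (hy i).le) (hP i j)) (hy j).le
  · simp_rw [hentry, mul_assoc, ← Finset.mul_sum]
    have := congrFun hyt i
    simp only [mulVec, dotProduct, Pi.smul_apply, smul_eq_mul] at this
    rw [this, mul_comm t, inv_mul_cancel_left₀ (hy i).ne']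
  · rw [Matrix.mul_assoc, charpoly_mul_comm, Matrix.mul_assoc, diagonal_mul_diagonal]
    have : (fun i => y i * y⁻¹ i) = fun _ => 1 := funext fun i => mul_inv_cancel₀ (hy i).ne'
    rw [this, diagonal_one, mul_one]

theorem charpoly_eq_of_tendsto {K : Type*} [Field K] [Infinite K] [TopologicalSpace K]
    [IsTopologicalRing K] [T2Space K] {α : Type*} {l : Filter α} [l.NeBot]
    {M N : α → Matrix ι ι K} {M₀ N₀ : Matrix ι ι K} (hM : Tendsto M l (𝓝 M₀))
    (hN : Tendsto N l (𝓝 N₀)) (h : ∀ a, (M a).charpoly = (N a).charpoly) :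
    M₀.charpoly = N₀.charpoly := by
  refine Polynomial.funext fun s => ?_
  have hcont : Continuous fun A : Matrix ι ι K => A.charpoly.eval s := by
    simp_rw [eval_charpoly]
    exact (continuous_const.sub continuous_id).matrix_det
  refine tendsto_nhds_unique ((hcont.tendsto _).comp hM) ?_
  simpa only [Function.comp_def, h] using (hcont.tendsto _).comp hN

theorem exists_nonneg_rowSum_eq_charpoly_eq_of_pos {A P : Matrix ι ι ℝ} (hP : ∀ i j, 0 < P i j)
    (hAP : ∀ i j, |A i j| ≤ P i j) {x : ι → ℝ} (hx0 : x ≠ 0) {r : ℝ} (hx : A *ᵥ x = r • x) :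
    ∃ (B : Matrix ι ι ℝ) (t : ℝ), (∀ i j, 0 ≤ B i j) ∧ (∀ i, ∑ j, B i j = t) ∧
      B.charpoly = P.charpoly ∧ |r| ≤ t ∧ t ≤ ∑ i, ∑ j, P i j := by
  obtain ⟨k, -⟩ := Function.ne_iff.1 hx0
  have : Nonempty ι := ⟨k⟩
  have hP' : ∀ i j, 0 ≤ P i j := fun i j => (hP i j).le
  obtain ⟨t, y, hy, hyt⟩ := exists_pos_eigenvector_of_pos hP
  obtain ⟨B, hB, hBrow, hBchar⟩ := exists_rowSum_eq_charpoly_eq_of_pos_eigenvector hP' hy hyt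
  have hyt' : ∀ i, (P *ᵥ y) i ≤ t * y i := fun i => by simp [hyt]
  refine ⟨B, t, hB, hBrow, hBchar, ?_, ?_⟩
  · refine le_of_mul_le_mulVec_of_mulVec_le_mul hP' (fun i => abs_nonneg (x i))
      (fun h => hx0 (funext fun i => abs_eq_zero.1 (congrFun h i))) (fun i => ?_) hy hyt'
    simpa [hx, abs_mul] using abs_mulVec_le_mulVec_abs hAP x i
  · refine le_of_mul_le_mulVec_of_mulVec_le_mul hP' (fun i => (hy i).le) (fun h => ?_)
      (fun i => by simp [hyt]) (y := 1) (fun _ => one_pos) fun i => by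
        simpa using mulVec_one_apply_le_sum hP' i
    simpa [h] using hy k

theorem exists_nonneg_rowSum_charpoly_eq_of_tendsto {A : Matrix ι ι ℝ} {P B : ℕ → Matrix ι ι ℝ}
    (hP : Tendsto P atTop (𝓝 A)) (hB : ∀ k i j, 0 ≤ B k i j) {t : ℕ → ℝ}
    (hBrow : ∀ k i, ∑ j, B k i j = t k) (hBchar : ∀ k, (B k).charpoly = (P k).charpoly)
    {a c : ℝ} (ht : ∀ k, t k ∈ Set.Icc a c) :
    ∃ (B' : Matrix ι ι ℝ) (t' : ℝ), (∀ i j, 0 ≤ B' i j) ∧ (∀ i, ∑ j, B' i j = t') ∧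
      B'.charpoly = A.charpoly ∧ a ≤ t' := by
  set S : Set (Matrix ι ι ℝ × ℝ) :=
    (Set.univ.pi fun _ => Set.univ.pi fun _ => Set.Icc 0 c) ×ˢ Set.Icc a c
  have hS : IsCompact S :=
    (isCompact_univ_pi fun _ => isCompact_univ_pi fun _ => isCompact_Icc).prod isCompact_Icc
  have hmemS : ∀ k, (B k, t k) ∈ S := fun k =>
    ⟨fun i _ j _ => ⟨hB k i j,
      (Finset.single_le_sum (fun j _ => hB k i j) (Finset.mem_univ j)).trans
        ((hBrow k i).trans_le (ht k).2)⟩, ht k⟩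
  -- `Matrix` carries the product topology, but instance search does not see through the synonym.
  have : FirstCountableTopology (Matrix ι ι ℝ) :=
    inferInstanceAs (FirstCountableTopology (ι → ι → ℝ))
  obtain ⟨⟨B', t'⟩, ⟨hB'S, hat', -⟩, φ, hφ, hlim⟩ := hS.tendsto_subseq hmemS
  have hBlim : Tendsto (B ∘ φ) atTop (𝓝 B') := (continuous_fst.tendsto _).comp hlim
  refine ⟨B', t', fun i j => (hB'S i trivial j trivial).1, fun i => ?_,
    charpoly_eq_of_tendsto hBlim (hP.comp hφ.tendsto_atTop) fun k => hBchar (φ k), hat'⟩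
  have hrow : Continuous fun M : Matrix ι ι ℝ => ∑ j, M i j := by fun_prop
  have := (hrow.tendsto B').comp hBlim
  simp only [Function.comp_def, hBrow] at this
  exact tendsto_nhds_unique this ((continuous_snd.tendsto _).comp hlim)

theorem exists_nonneg_rowSum_eq_charpoly_eq {A : Matrix ι ι ℝ} (hA : ∀ i j, 0 ≤ A i j) {r : ℝ}
    (hr : A.charpoly.IsRoot r) (hmax : ∀ s : ℝ, A.charpoly.IsRoot s → s ≤ r) :
    ∃ B : Matrix ι ι ℝ, (∀ i j, 0 ≤ B i j) ∧ (∀ i, ∑ j, B i j = r) ∧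
      B.charpoly = A.charpoly := by
  obtain ⟨x, hx0, hx⟩ := (isRoot_charpoly_iff_exists_mulVec_eq_smul A r).1 hr
  obtain ⟨i₀, -⟩ := Function.ne_iff.1 hx0
  set P : ℕ → Matrix ι ι ℝ := fun k => A + ((k : ℝ) + 1)⁻¹ • of fun _ _ => 1
  have hδ : ∀ k : ℕ, 0 < ((k : ℝ) + 1)⁻¹ ∧ ((k : ℝ) + 1)⁻¹ ≤ 1 := fun k =>
    ⟨by positivity, inv_le_one_of_one_le₀ (by simp)⟩
  have hPlim : Tendsto P atTop (𝓝 A) := by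
    have hδlim : Tendsto (fun k : ℕ => ((k : ℝ) + 1)⁻¹) atTop (𝓝 0) := by
      simpa using tendsto_one_div_add_atTop_nhds_zero_nat (𝕜 := ℝ)
    simpa only [zero_smul, add_zero] using
      (tendsto_const_nhds (x := A)).add (hδlim.smul_const (of fun (_ : ι) (_ : ι) => (1 : ℝ)))
  have hstep : ∀ k, ∃ (B : Matrix ι ι ℝ) (t : ℝ), (∀ i j, 0 ≤ B i j) ∧ (∀ i, ∑ j, B i j = t) ∧
      B.charpoly = (P k).charpoly ∧ t ∈ Set.Icc |r| (∑ i, ∑ j, (A i j + 1)) := fun k => by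
    obtain ⟨B, t, hB, hBrow, hBchar, hrt, htc⟩ := exists_nonneg_rowSum_eq_charpoly_eq_of_pos
      (P := P k) (fun i j => by simpa [P] using add_pos_of_nonneg_of_pos (hA i j) (hδ k).1)
      (fun i j => by simp [P, abs_of_nonneg (hA i j), (hδ k).1.le]) hx0 hx
    refine ⟨B, t, hB, hBrow, hBchar, hrt, htc.trans (Finset.sum_le_sum fun i _ =>
      Finset.sum_le_sum fun j _ => by simpa [P] using (hδ k).2)⟩
  choose B t hB hBrow hBchar ht using hstep
  obtain ⟨B', t', hB', hB'row, hB'char, hrt'⟩ :=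
    exists_nonneg_rowSum_charpoly_eq_of_tendsto hPlim hB hBrow hBchar ht
  have ht'r : t' ≤ r := by
    refine hmax t' (hB'char ▸ (isRoot_charpoly_iff_exists_mulVec_eq_smul B' t').2
      ⟨1, Function.ne_iff.2 ⟨i₀, one_ne_zero⟩, ?_⟩)
    ext i
    simp [mulVec, dotProduct, hB'row]
  exact ⟨B', hB', fun i => (hB'row i).trans (le_antisymm ht'r ((le_abs_self r).trans hrt')),
    hB'char⟩

theorem det_add_vecMulVec_mul {R : Type*} [CommRing R] {M : Matrix ι ι R}
    (hM : IsUnit M.det) {u : ι → R} {g : R} (hu : M *ᵥ u = g • u) (v : ι → R) :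
    (M + vecMulVec u v).det * g = M.det * (g + v ⬝ᵥ u) := by
  have hinv : g • (M⁻¹ *ᵥ u) = u := by
    rw [← mulVec_smul, ← hu, mulVec_mulVec, nonsing_inv_mul _ hM, one_mulVec]
  have hfac : M + vecMulVec u v = M * (1 + vecMulVec (M⁻¹ *ᵥ u) v) := by
    rw [Matrix.mul_add, mul_one, mul_vecMulVec, mulVec_mulVec, mul_nonsing_inv _ hM, one_mulVec]
  rw [hfac, det_mul, vecMulVec_eq Unit, det_one_add_replicateCol_mul_replicateRow, mul_assoc]
  congr 1
  rw [add_mul, one_mul, mul_comm, ← smul_eq_mul, ← dotProduct_smul, hinv]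

theorem det_add_vecMulVec_mul_of_det_ne_zero {R : Type*} [CommRing R] [IsDomain R]
    {M : Matrix ι ι R} (hM : M.det ≠ 0) {u : ι → R} {g : R} (hu : M *ᵥ u = g • u)
    (v : ι → R) : (M + vecMulVec u v).det * g = M.det * (g + v ⬝ᵥ u) := by
  let φ := algebraMap R (FractionRing R)
  have hφ : Function.Injective φ := IsFractionRing.injective R (FractionRing R)
  have hMφ : IsUnit (φ.mapMatrix M).det := by
    rw [← RingHom.map_det, isUnit_iff_ne_zero]
    exact (map_ne_zero_iff φ hφ).2 hM
  have huφ : φ.mapMatrix M *ᵥ (φ ∘ u) = φ g • (φ ∘ u) := by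
    ext i
    simp [← RingHom.map_mulVec, hu]
  apply hφ
  have := det_add_vecMulVec_mul hMφ huφ (φ ∘ v)
  rw [← RingHom.map_det, ← RingHom.map_dotProduct] at this
  rw [map_mul, map_mul, map_add, ← this, RingHom.map_det, map_add]
  congr 3
  ext i j
  simp [vecMulVec_apply]

theorem charpoly_add_vecMulVec_mul {R : Type*} [CommRing R] [IsDomain R] {B : Matrix ι ι R}
    {u : ι → R} {μ : R} (hu : B *ᵥ u = μ • u) (v : ι → R) :
    (B + vecMulVec u v).charpoly * (X - C μ) = B.charpoly * (X - C (μ + v ⬝ᵥ u)) := by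
  have hchar : charmatrix (B + vecMulVec u v) = charmatrix B + vecMulVec (C ∘ u) (-(C ∘ v)) := by
    ext i j
    by_cases h : i = j
    · subst h
      simp [vecMulVec_apply]
      ring
    · simp [charmatrix_apply_ne _ _ _ h, vecMulVec_apply]
      ring
  have hu' : charmatrix B *ᵥ (C ∘ u) = (X - C μ) • (C ∘ u) := by
    ext i
    have := congrFun hu i
    rw [charmatrix, sub_mulVec, Pi.sub_apply, RingHom.mapMatrix_apply, ← RingHom.map_mulVec, this]
    simp [scalar_apply, mulVec_diagonal]
    ring
  rw [charpoly, hchar, det_add_vecMulVec_mul_of_det_ne_zero (charpoly_monic B).ne_zero hu',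
    charpoly, neg_dotProduct, ← RingHom.map_dotProduct, C_add]
  ring

theorem exists_rowSum_colSum_eq_charpoly_mul_eq [Nonempty ι] {B : Matrix ι ι ℝ}
    (hB : ∀ i j, 0 ≤ B i j) {r : ℝ} (hrow : ∀ i, ∑ j, B i j = r) {ε : ℝ}
    (hε : ∀ j, ∑ i, B i j - r ≤ ε) :
    ∃ D : Matrix ι ι ℝ, (∀ i j, 0 ≤ D i j) ∧ (∀ i, ∑ j, D i j = r + ε) ∧
      (∀ j, ∑ i, D i j = r + ε) ∧ D.charpoly * (X - C r) = B.charpoly * (X - C (r + ε)) := by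
  set n : ℝ := (Fintype.card ι : ℝ)
  have hn : 0 < n := Nat.cast_pos.2 Fintype.card_pos
  set w : ι → ℝ := fun j => (r + ε - ∑ i, B i j) / n
  have hw : ∑ j, w j = ε := by
    rw [← Finset.sum_div, Finset.sum_sub_distrib, Finset.sum_comm,
      Finset.sum_congr rfl fun i _ => hrow i]
    simp only [Finset.sum_const, Finset.card_univ, nsmul_eq_mul]
    field_simp
    ring
  have hcol : ∀ j, ∑ i, B i j + n * w j = r + ε := fun j => by
    simp only [w]
    field_simp
    ring
  refine ⟨B + vecMulVec 1 w, fun i j => ?_, fun i => ?_, fun j => ?_, ?_⟩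
  · simpa [vecMulVec_apply] using add_nonneg (hB i j) (div_nonneg (by linarith [hε j]) hn.le)
  · simp [Finset.sum_add_distrib, hrow, hw]
  · simpa [vecMulVec_apply, Finset.sum_add_distrib] using hcol j
  · have hu : B *ᵥ 1 = r • 1 := by
      ext i
      simp [mulVec, dotProduct, hrow]
    rw [charpoly_add_vecMulVec_mul hu w, dotProduct_one, hw]

end Matrix

/-- Let `A` be an entrywise nonnegative real `n × n` matrix and let `r` be its Perron
eigenvalue (an eigenvalue of `A`, over `ℂ`, dominating the modulus of every eigenvalue).
Then there exists a real `k_A ≥ -r` such that for every `ε ≥ k_A` there is an entrywise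
nonnegative real `n × n` matrix `D` with all row and column sums equal to `r + ε` whose
characteristic polynomial satisfies
`charpoly D * (t - r) = charpoly A * (t - (r + ε))`. -/
theorem stmt7 (n : ℕ) (A : Matrix (Fin n) (Fin n) ℝ) (hA : ∀ i j, 0 ≤ A i j) (r : ℝ)
    (hr : (A.map (Complex.ofReal)).charpoly.IsRoot (r : ℂ))
    (hmax : ∀ μ : ℂ, (A.map (Complex.ofReal)).charpoly.IsRoot μ → ‖μ‖ ≤ r) :
    ∃ kA : ℝ, -r ≤ kA ∧ ∀ ε : ℝ, kA ≤ ε →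
      ∃ D : Matrix (Fin n) (Fin n) ℝ,
        (∀ i j, 0 ≤ D i j) ∧
        (∀ i, ∑ j, D i j = r + ε) ∧
        (∀ j, ∑ i, D i j = r + ε) ∧
        D.charpoly * (X - C r) = A.charpoly * (X - C (r + ε)) := by
  have hreal (s : ℝ) : (A.map Complex.ofReal).charpoly.IsRoot s ↔ A.charpoly.IsRoot s := by
    rw [show A.map Complex.ofReal = A.map Complex.ofRealHom from rfl, charpoly_map,
      ← Complex.ofRealHom_eq_coe, isRoot_map_iff Complex.ofReal_injective]
  obtain ⟨B, hB, hBrow, hBchar⟩ := exists_nonneg_rowSum_eq_charpoly_eq hA ((hreal r).1 hr)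
    fun s hs => (le_abs_self s).trans (by simpa using hmax s ((hreal s).2 hs))
  obtain _ | _ := isEmpty_or_nonempty (Fin n)
  · simp at hr
  refine ⟨Finset.univ.sup' Finset.univ_nonempty (fun j => ∑ i, B i j) - r, ?_, fun ε hε => ?_⟩
  · obtain ⟨j⟩ := ‹Nonempty (Fin n)›
    linarith [Finset.le_sup'_of_le (fun j => ∑ i, B i j) (Finset.mem_univ j)
      (Finset.sum_nonneg fun i _ => hB i j)]
  · rw [← hBchar]
    exact exists_rowSum_colSum_eq_charpoly_mul_eq hB hBrow fun j =>
      (sub_le_sub_right (Finset.le_sup' (fun j => ∑ i, B i j) (Finset.mem_univ j)) r).trans hε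
end

section
/- Let A = (a_{ij}) be an n×n stochastic matrix (entrywise nonnegative with every row sum equal to 1). For each j, let x_j denote the sum of the j-th column of A and let a_j denote the smallest entry of the j-th column of A. If x_j ≤ 1 + n·a_j for every j = 1, ..., n, then the matrix B = A − J_n·A + J_n is doubly stochastic (entrywise nonnegative with all row sums and column sums equal to 1) and B has the same characteristic polynomial as A. -/
/-!
Since the rows of `A` sum to `1`, `B = A - J_n A + J_n = A + 𝟙 rᵀ` with `r_j = (1 - x_j) / n`:
a rank-one perturbation of `A` along its eigenvector `𝟙` (eigenvalue `1`) with `rᵀ 𝟙 = 0`.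
For such a perturbation `N = u vᵀ` of `A`, with `A u = μ u` and `vᵀ u = 0`, the
characteristic matrix `M = X - A` satisfies `M N = (X - μ) N`, hence
`(X - μ) (M - N) = M ((X - μ) - N)`. Taking determinants, `det ((X - μ) - N) = (X - μ)ⁿ`
as `charpoly (u vᵀ) = Xⁿ - (vᵀ u) Xⁿ⁻¹`, and the monic factor `(X - μ)ⁿ` cancels.
Nonnegativity of `b_ij = a_ij + (1 - x_j) / n` is exactly the column condition
`x_j ≤ 1 + n a_j`.
-/

open Matrix Polynomial Finset

theorem Matrix.charpoly_add_vecMulVec_of_mulVec_eq_smul {R ι : Type*} [CommRing R] [Fintype ι]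
    [DecidableEq ι] (A : Matrix ι ι R) {u v : ι → R} {μ : R} (hu : A *ᵥ u = μ • u)
    (hvu : v ⬝ᵥ u = 0) : (A + vecMulVec u v).charpoly = A.charpoly := by
  let c : R[X] := X - C μ
  let M := A.charmatrix
  let N : Matrix ι ι R[X] := vecMulVec (C ∘ u) (C ∘ v)
  have hchar : (A + vecMulVec u v).charmatrix = M - N := by
    rw [charmatrix, map_add, sub_add_eq_sub_sub]
    congr 1
    ext i j
    simp [N, vecMulVec_apply]
  have hMN : M * N = c • N := by
    have : M *ᵥ (C ∘ u) = c • (C ∘ u) := by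
      ext i
      simp [M, c, charmatrix, sub_mulVec, ← RingHom.map_mulVec, hu, sub_mul]
    rw [mul_vecMulVec, this, smul_vecMulVec]
  have hfactor : c • (M - N) = M * (scalar ι c - N) := by
    rw [Matrix.mul_sub, hMN, smul_sub, scalar_apply, ← smul_eq_mul_diagonal]
  have hN : (scalar ι c - N).det = c ^ Fintype.card ι := by
    have : (C ∘ u) ⬝ᵥ (C ∘ v) = 0 := by
      rw [dotProduct_comm, ← RingHom.map_dotProduct C, hvu, map_zero]
    rw [← eval_charpoly, charpoly_vecMulVec, this, zero_smul, sub_zero, eval_pow, eval_X]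
  have hdet :
      c ^ Fintype.card ι * (A + vecMulVec u v).charpoly = c ^ Fintype.card ι * A.charpoly := by
    rw [charpoly, charpoly, hchar, ← det_smul, hfactor, det_mul, hN, mul_comm]
  exact ((monic_X_sub_C μ).pow _).isRegular.left hdet

section
variable {n : ℕ} (A : Matrix (Fin n) (Fin n) ℝ)

noncomputable def columnCorrection (j : Fin n) : ℝ := (1 - ∑ i, A i j) / n

theorem sub_Jmat_mul_add_Jmat_eq :
    A - Jmat n * A + Jmat n = A + vecMulVec 1 (columnCorrection A) := by
  ext i j
  simp only [Matrix.add_apply, Matrix.sub_apply, mul_apply, Jmat, of_apply, vecMulVec_apply,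
    columnCorrection, Pi.one_apply, one_mul, ← mul_sum]
  ring

variable {A}

theorem sum_columnCorrection (hrow : ∀ i, ∑ j, A i j = 1) :
    ∑ j, columnCorrection A j = 0 := by
  simp only [columnCorrection, ← sum_div, sum_sub_distrib]
  rw [sum_comm]
  simp [hrow]

theorem sum_col_add_card_mul_columnCorrection (j : Fin n) :
    ∑ i, A i j + n * columnCorrection A j = 1 := by
  have : (n : ℝ) ≠ 0 := Nat.cast_ne_zero.mpr (Fin.pos j).ne'
  rw [columnCorrection, mul_div_cancel₀ _ this]
  ring

theorem add_columnCorrection_nonneg (hcond : ∀ j, ∑ i, A i j ≤ 1 + n * ⨅ i, A i j)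
    (i j : Fin n) : 0 ≤ A i j + columnCorrection A j := by
  have hn : (0 : ℝ) < n := Nat.cast_pos.mpr (Fin.pos j)
  have hmin : ⨅ k, A k j ≤ A i j := ciInf_le (Set.finite_range fun k => A k j).bddBelow i
  have := hcond j
  rw [columnCorrection, ← neg_le_iff_add_nonneg', le_div_iff₀ hn]
  nlinarith

end

theorem stmt9_general (n : ℕ) (A : Matrix (Fin n) (Fin n) ℝ)
    (hrow : ∀ i, ∑ j, A i j = 1)
    (hcond : ∀ j, ∑ i, A i j ≤ 1 + n * ⨅ i, A i j) :
    (∀ i j, 0 ≤ (A - Jmat n * A + Jmat n) i j) ∧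
    (∀ i, ∑ j, (A - Jmat n * A + Jmat n) i j = 1) ∧
    (∀ j, ∑ i, (A - Jmat n * A + Jmat n) i j = 1) ∧
    (A - Jmat n * A + Jmat n).charpoly = A.charpoly := by
  rw [sub_Jmat_mul_add_Jmat_eq]
  refine ⟨fun i j => ?_, fun i => ?_, fun j => ?_, ?_⟩
  · simpa using add_columnCorrection_nonneg hcond i j
  · simp [sum_add_distrib, hrow, sum_columnCorrection hrow]
  · simpa [sum_add_distrib] using sum_col_add_card_mul_columnCorrection j
  · refine charpoly_add_vecMulVec_of_mulVec_eq_smul A (μ := 1) ?_ ?_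
    · ext i
      simp [mulVec, dotProduct, hrow]
    · simpa [dotProduct] using sum_columnCorrection hrow

/-- Let `A` be an `n × n` stochastic matrix.  If for every column `j` the column sum
`x_j = Σ_i a_{ij}` and the smallest column entry `a_j = ⨅ i, a_{ij}` satisfy
`x_j ≤ 1 + n·a_j`, then `B = A - J_n·A + J_n` is doubly stochastic and has the same
characteristic polynomial as `A`. -/
theorem stmt9 (n : ℕ) (A : Matrix (Fin n) (Fin n) ℝ)
    (hA : ∀ i j, 0 ≤ A i j) (hrow : ∀ i, ∑ j, A i j = 1)
    (hcond : ∀ j, ∑ i, A i j ≤ 1 + n * ⨅ i, A i j) :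
    (∀ i j, 0 ≤ (A - Jmat n * A + Jmat n) i j) ∧
    (∀ i, ∑ j, (A - Jmat n * A + Jmat n) i j = 1) ∧
    (∀ j, ∑ i, (A - Jmat n * A + Jmat n) i j = 1) ∧
    (A - Jmat n * A + Jmat n).charpoly = A.charpoly :=
  stmt9_general n A hrow hcond
end

section
/- Let A be an entrywise nonnegative real n×n matrix each of whose row sums equals r (an r-generalized stochastic matrix), with eigenvalue multiset (r, λ_2, ..., λ_n). Then there exists an entrywise nonnegative real n×n matrix B with every row sum and every column sum equal to n·r such that charpoly(B)·(t − r) = charpoly(A)·(t − n·r); that is, the eigenvalue multiset of B is (n·r, λ_2, ..., λ_n). -/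
open Polynomial
open Matrix

section aux
variable {m : ℕ}

/-- P: identity with first column replaced by all ones. -/
noncomputable def Pmat (m : ℕ) : Matrix (Fin (m+1)) (Fin (m+1)) ℝ :=
  Matrix.of fun i j => if j = 0 then 1 else if i = j then 1 else 0

/-- Q = P⁻¹. -/
noncomputable def Qmat (m : ℕ) : Matrix (Fin (m+1)) (Fin (m+1)) ℝ :=
  Matrix.of fun i j => if j = 0 then (if i = 0 then 1 else -1) else if i = j then 1 else 0

lemma QP_eq_one (m : ℕ) : Qmat m * Pmat m = 1 := by
  ext i j
  rw [Matrix.mul_apply, Fin.sum_univ_succ]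
  rcases Fin.eq_zero_or_eq_succ j with hj | ⟨j', rfl⟩
  · subst hj
    rcases Fin.eq_zero_or_eq_succ i with hi | ⟨i', rfl⟩
    · subst hi; simp [Pmat, Qmat, Fin.succ_ne_zero, eq_comm]
    · simp [Pmat, Qmat, Fin.succ_ne_zero]
  · rcases Fin.eq_zero_or_eq_succ i with hi | ⟨i', rfl⟩
    · subst hi
      simp [Pmat, Qmat, (Fin.succ_ne_zero j').symm, Fin.succ_ne_zero]
    · simp [Pmat, Qmat, Fin.succ_ne_zero, Fin.succ_inj, Matrix.one_apply, eq_comm]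

lemma Q_rowsum (m : ℕ) (i : Fin (m+1)) :
    ∑ l, Qmat m i l = if i = 0 then 1 else 0 := by
  rw [Fin.sum_univ_succ]
  rcases Fin.eq_zero_or_eq_succ i with hi | ⟨i', rfl⟩
  · subst hi; simp [Qmat, Fin.succ_ne_zero, eq_comm]
  · simp only [Qmat, Matrix.of_apply, if_pos rfl, if_neg (Fin.succ_ne_zero i'),
      Fin.succ_ne_zero, if_false, if_true, Fin.succ_inj]
    rw [Finset.sum_ite_eq Finset.univ i' (fun _ => (1:ℝ))]
    simp
end aux

lemma charpoly_conj' {k : Type*} [Fintype k] [DecidableEq k]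
    (P Q M : Matrix k k ℝ) (hQP : Q * P = 1) :
    (Q * M * P).charpoly = M.charpoly := by
  have hmap1 : (Q * P).map (C : ℝ →+* ℝ[X]) = 1 := by
    rw [hQP]; exact Matrix.map_one _ (map_zero C) (map_one C)
  have hQPmap : Q.map (C : ℝ →+* ℝ[X]) * P.map C = 1 := by
    rw [← hmap1, Matrix.map_mul]
  have h1 : charmatrix (Q * M * P) = Q.map (C : ℝ →+* ℝ[X]) * charmatrix M * P.map C := by
    unfold charmatrix
    rw [Matrix.mul_sub, Matrix.sub_mul]
    congr 1
    · rw [← (Matrix.scalar_commute (X : ℝ[X]) (fun r' => Commute.all _ _) (Q.map C)).eq,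
        Matrix.mul_assoc, hQPmap, Matrix.mul_one]
    · simp only [RingHom.mapMatrix_apply, Matrix.map_mul, Matrix.mul_assoc]
  have hdet : (Q.map (C : ℝ →+* ℝ[X])).det * (P.map C).det = 1 := by
    rw [← det_mul, hQPmap, det_one]
  rw [Matrix.charpoly, h1, det_mul, det_mul, Matrix.charpoly]
  calc (Q.map (C : ℝ →+* ℝ[X])).det * (charmatrix M).det * (P.map C).det
      = (charmatrix M).det * ((Q.map (C : ℝ →+* ℝ[X])).det * (P.map C).det) := by ring
    _ = (charmatrix M).det := by rw [hdet, mul_one]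

lemma conj_col0 {m : ℕ} (M : Matrix (Fin (m+1)) (Fin (m+1)) ℝ) (c : ℝ)
    (h : ∀ i, ∑ j, M i j = c) (i : Fin (m+1)) :
    (Qmat m * M * Pmat m) i 0 = if i = 0 then c else 0 := by
  rw [Matrix.mul_apply]
  have h1 : ∀ k, (Qmat m * M) i k * Pmat m k 0 = (Qmat m * M) i k := by
    intro k; simp [Pmat]
  rw [Finset.sum_congr rfl fun k _ => h1 k]
  calc ∑ k, (Qmat m * M) i k = ∑ k, ∑ l, Qmat m i l * M l k := by
        simp [Matrix.mul_apply]
    _ = ∑ l, ∑ k, Qmat m i l * M l k := Finset.sum_comm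
    _ = ∑ l, Qmat m i l * ∑ k, M l k := by simp [Finset.mul_sum]
    _ = (∑ l, Qmat m i l) * c := by simp only [h]; rw [Finset.sum_mul]
    _ = _ := by rw [Q_rowsum]; split <;> simp

lemma conj_row_ne_zero {m : ℕ} (D : Matrix (Fin (m+1)) (Fin (m+1)) ℝ) (w : Fin (m+1) → ℝ)
    (hD : ∀ l k, D l k = w k) (i j : Fin (m+1)) (hi : i ≠ 0) :
    (Qmat m * D * Pmat m) i j = 0 := by
  have h1 : ∀ k, (Qmat m * D) i k = 0 := by
    intro k
    rw [Matrix.mul_apply]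
    calc ∑ l, Qmat m i l * D l k = (∑ l, Qmat m i l) * w k := by
          simp only [hD]; rw [Finset.sum_mul]
      _ = 0 := by rw [Q_rowsum, if_neg hi, zero_mul]
  rw [Matrix.mul_apply]
  simp [h1]

/-- charpoly of a matrix whose 0-th column is `c • e₀`. -/
lemma charpoly_col0 {m : ℕ} (M : Matrix (Fin (m+1)) (Fin (m+1)) ℝ) (c : ℝ)
    (h : ∀ i, M i 0 = if i = 0 then c else 0) :
    M.charpoly = (X - C c) * ((charmatrix M).submatrix Fin.succ Fin.succ).det := by
  rw [Matrix.charpoly, Matrix.det_succ_column_zero, Fin.sum_univ_succ]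
  have h0 : charmatrix M 0 0 = X - C c := by rw [charmatrix_apply_eq, h 0, if_pos rfl]
  have hsucc : ∀ i : Fin m, charmatrix M i.succ 0 = 0 := by
    intro i
    rw [charmatrix_apply_ne _ _ _ (Fin.succ_ne_zero i), h i.succ, if_neg (Fin.succ_ne_zero i),
      map_zero, neg_zero]
  simp only [hsucc, mul_zero, zero_mul, Finset.sum_const_zero, add_zero, h0, Fin.val_zero,
    pow_zero, one_mul, Fin.succAbove_zero]

/-- Let `A` be an entrywise nonnegative real `n × n` matrix (`n ≥ 1`) with every row sum
equal to `r`.  Then there exists an entrywise nonnegative real `n × n` matrix `B` with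
every row and column sum equal to `n·r` such that
`charpoly B * (t - r) = charpoly A * (t - n·r)`; i.e. the eigenvalue multiset of `B` is
obtained from that of `A` by replacing one occurrence of `r` by `n·r`. -/
theorem stmt12 (n : ℕ) (hn : 0 < n) (r : ℝ) (A : Matrix (Fin n) (Fin n) ℝ)
    (hA : ∀ i j, 0 ≤ A i j) (hrow : ∀ i, ∑ j, A i j = r) :
    ∃ B : Matrix (Fin n) (Fin n) ℝ,
      (∀ i j, 0 ≤ B i j) ∧
      (∀ i, ∑ j, B i j = n * r) ∧
      (∀ j, ∑ i, B i j = n * r) ∧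
      B.charpoly * (X - C r) = A.charpoly * (X - C (n * r)) := by
  obtain ⟨m, rfl⟩ := Nat.exists_eq_succ_of_ne_zero hn.ne'
  set N : ℝ := ((m + 1 : ℕ) : ℝ) with hNdef
  have hN : (0:ℝ) < N := by positivity
  set w : Fin (m+1) → ℝ := fun j => r - (∑ i, A i j) / N with hwdef
  set B : Matrix (Fin (m+1)) (Fin (m+1)) ℝ := Matrix.of fun i j => A i j + w j with hBdef
  have hentry : ∀ i j, A i j ≤ r := fun i j =>
    (hrow i) ▸ Finset.single_le_sum (fun k _ => hA i k) (Finset.mem_univ j)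
  have hcol_le : ∀ j, ∑ i, A i j ≤ N * r := by
    intro j
    calc ∑ i, A i j ≤ ∑ _i : Fin (m+1), r := Finset.sum_le_sum fun i _ => hentry i j
      _ = N * r := by rw [Finset.sum_const]; simp [hNdef, nsmul_eq_mul]
  have hw : ∀ j, 0 ≤ w j := by
    intro j
    rw [hwdef, sub_nonneg, div_le_iff₀ hN]
    rw [mul_comm]; exact hcol_le j
  have htot : ∑ j, ∑ i, A i j = N * r := by
    rw [Finset.sum_comm]
    calc ∑ i, ∑ j, A i j = ∑ _i : Fin (m+1), r := Finset.sum_congr rfl fun i _ => hrow i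
      _ = N * r := by rw [Finset.sum_const]; simp [hNdef, nsmul_eq_mul]
  have hwsum : ∑ j, w j = N * r - r := by
    rw [hwdef, Finset.sum_sub_distrib, Finset.sum_const, ← Finset.sum_div, htot,
      mul_div_cancel_left₀ r hN.ne']
    simp [hNdef, nsmul_eq_mul]
  have hBnn : ∀ i j, 0 ≤ B i j := fun i j => add_nonneg (hA i j) (hw j)
  have hBrow : ∀ i, ∑ j, B i j = N * r := by
    intro i
    rw [hBdef]
    calc ∑ j, (A i j + w j) = (∑ j, A i j) + ∑ j, w j := Finset.sum_add_distrib
      _ = r + (N * r - r) := by rw [hrow, hwsum]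
      _ = N * r := by ring
  have hBcol : ∀ j, ∑ i, B i j = N * r := by
    intro j
    rw [hBdef]
    have hc : N * ((∑ i, A i j) / N) = ∑ i, A i j := mul_div_cancel₀ _ hN.ne'
    calc ∑ i, (A i j + w j) = (∑ i, A i j) + (m+1 : ℕ) • w j := by
          rw [Finset.sum_add_distrib, Finset.sum_const, Finset.card_univ, Fintype.card_fin]
      _ = (∑ i, A i j) + N * (r - (∑ i, A i j) / N) := by rw [nsmul_eq_mul, hwdef]
      _ = N * r := by rw [mul_sub, hc]; ring
  refine ⟨B, hBnn, hBrow, hBcol, ?_⟩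
  -- charpoly part
  have hQP := QP_eq_one m
  have hcA : (Qmat m * A * Pmat m).charpoly = A.charpoly := charpoly_conj' _ _ _ hQP
  have hcB : (Qmat m * B * Pmat m).charpoly = B.charpoly := charpoly_conj' _ _ _ hQP
  have hA0 := conj_col0 A r hrow
  have hB0 := conj_col0 B (N * r) hBrow
  have hdA := charpoly_col0 (Qmat m * A * Pmat m) r hA0
  have hdB := charpoly_col0 (Qmat m * B * Pmat m) (N * r) hB0
  have hDm : ∀ i j : Fin m, (Qmat m * B * Pmat m) i.succ j.succ
      = (Qmat m * A * Pmat m) i.succ j.succ := by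
    intro i j
    have hBA : B = A + Matrix.of (fun (_ : Fin (m+1)) k => w k) := by
      ext i' j'; simp [hBdef]
    have h0 := conj_row_ne_zero (Matrix.of fun (_ : Fin (m+1)) k => w k) w
      (fun _ _ => rfl) i.succ j.succ (Fin.succ_ne_zero i)
    rw [hBA, Matrix.mul_add, Matrix.add_mul, Matrix.add_apply, h0, add_zero]
  have hsub : ((charmatrix (Qmat m * B * Pmat m)).submatrix Fin.succ Fin.succ)
      = ((charmatrix (Qmat m * A * Pmat m)).submatrix Fin.succ Fin.succ) := by
    ext i j
    simp only [Matrix.submatrix_apply, charmatrix_apply, hDm]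
  rw [← hcA, ← hcB, hdA, hdB, hsub]
  ring
end

section
/- Let A be a real n×n matrix having 1 as an eigenvalue. Then A is similar over ℝ to a matrix all of whose row sums and column sums equal 1 if and only if there exist vectors v, w ∈ ℝⁿ with A·v = v, Aᵀ·w = w, and ⟨v, w⟩ ≠ 0 (i.e., the space of left eigenvectors of A corresponding to 1 is not orthogonal to the space of right eigenvectors of A corresponding to 1). -/
/-!
With `𝟙` the all-ones vector, `B = P⁻¹AP` has unit row sums iff `B𝟙 = 𝟙`, i.e. `A(P𝟙) = P𝟙`,
and unit column sums iff `𝟙ᵀB = 𝟙ᵀ`, i.e. `wᵀA = wᵀ` for `wᵀ = 𝟙ᵀP⁻¹`; moreover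
`⟨P𝟙, w⟩ = ⟨𝟙, 𝟙⟩ = n`. Conversely, invertible matrices act transitively, via
`(x, y) ↦ (Px, yᵀP⁻¹)`, on pairs of a vector and a covector with a given nonzero pairing, so
after rescaling `v` to `⟨v, w⟩ = n` some `P` sends `(𝟙, 𝟙)` to `(v, w)`.
-/

open Matrix

namespace Matrix

section RowColSums

variable {R ι : Type*} [NonAssocSemiring R] [Fintype ι]

theorem mulVec_one_eq_one_iff (B : Matrix ι ι R) : B *ᵥ 1 = 1 ↔ ∀ i, ∑ j, B i j = 1 := by
  simp [funext_iff, mulVec, dotProduct]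

theorem one_vecMul_eq_one_iff (B : Matrix ι ι R) : 1 ᵥ* B = 1 ↔ ∀ j, ∑ i, B i j = 1 := by
  simp [funext_iff, vecMul, dotProduct]

end RowColSums

section Conj

variable {R ι : Type*} [CommRing R] [Fintype ι] [DecidableEq ι] {P : Matrix ι ι R}

theorem inv_mul_mul_mulVec_eq_self_iff (hP : IsUnit P.det) (A : Matrix ι ι R) (x : ι → R) :
    (P⁻¹ * A * P) *ᵥ x = x ↔ A *ᵥ (P *ᵥ x) = P *ᵥ x := by
  rw [← (mulVec_injective_of_isUnit ((isUnit_iff_isUnit_det P).2 hP)).eq_iff, mulVec_mulVec,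
    ← Matrix.mul_assoc, ← Matrix.mul_assoc, mul_nonsing_inv _ hP, Matrix.one_mul, mulVec_mulVec]

theorem vecMul_inv_mul_mul_eq_self_iff (hP : IsUnit P.det) (A : Matrix ι ι R) {w y : ι → R}
    (hw : w ᵥ* P = y) : y ᵥ* (P⁻¹ * A * P) = y ↔ w ᵥ* A = w := by
  have hy : y ᵥ* P⁻¹ = w := by rw [← hw, vecMul_vecMul, mul_nonsing_inv _ hP, vecMul_one]
  rw [← vecMul_vecMul, ← vecMul_vecMul, hy, ← hw,
    (vecMul_injective_of_isUnit ((isUnit_iff_isUnit_det P).2 hP)).eq_iff]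

end Conj

section Field

variable {K ι : Type*} [Field K] [Fintype ι] [DecidableEq ι]

theorem det_one_add_vecMulVec (u v : ι → K) : (1 + vecMulVec u v).det = 1 + v ⬝ᵥ u := by
  rw [vecMulVec_eq Unit, det_one_add_replicateCol_mul_replicateRow]

theorem isUnit_det_smul_one_add_vecMulVec {a : K} (ha : a ≠ 0) {u v : ι → K}
    (h : a + v ⬝ᵥ u ≠ 0) : IsUnit (a • 1 + vecMulVec u v).det := by
  have : a • 1 + vecMulVec u v = a • (1 + vecMulVec (a⁻¹ • u) v) := by
    rw [smul_add, smul_vecMulVec, smul_smul, mul_inv_cancel₀ ha, one_smul]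
  rw [this, det_smul, det_one_add_vecMulVec, isUnit_iff_ne_zero, dotProduct_smul, smul_eq_mul,
    show 1 + a⁻¹ * (v ⬝ᵥ u) = a⁻¹ * (a + v ⬝ᵥ u) by field_simp]
  exact mul_ne_zero (pow_ne_zero _ ha) (mul_ne_zero (inv_ne_zero ha) h)

/- `P = a • 1 + d⁻¹ • (v - a • x) (y - a • w)ᵀ` with `d = ⟨x, y⟩ - a ⟨w, x⟩` satisfies both
equations for every `a` with `d ≠ 0`; its determinant is `aⁿ⁻¹ (⟨y, v⟩ - a ⟨x, y⟩) / d`, so it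
suffices to avoid three values of `a`. -/
theorem exists_isUnit_det_mulVec_eq_vecMul_eq [Infinite K] {x y v w : ι → K}
    (h : v ⬝ᵥ w = x ⬝ᵥ y) (h0 : x ⬝ᵥ y ≠ 0) :
    ∃ P : Matrix ι ι K, IsUnit P.det ∧ P *ᵥ x = v ∧ w ᵥ* P = y := by
  classical
  set c := x ⬝ᵥ y
  obtain ⟨a, ha⟩ := Infinite.exists_notMem_finset ({0, c / (w ⬝ᵥ x), (y ⬝ᵥ v) / c} : Finset K)
  simp only [Finset.mem_insert, Finset.mem_singleton, not_or] at ha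
  obtain ⟨ha0, had, hadet⟩ := ha
  set d := c - a * (w ⬝ᵥ x)
  have hd : d ≠ 0 := by
    intro hd0
    rw [sub_eq_zero] at hd0
    rcases eq_or_ne (w ⬝ᵥ x) 0 with hwx | hwx
    · rw [hwx, mul_zero] at hd0
      exact h0 hd0
    · exact had (eq_div_of_mul_eq hwx hd0.symm)
  have hyx : (y - a • w) ⬝ᵥ x = d := by
    rw [sub_dotProduct, smul_dotProduct, dotProduct_comm, smul_eq_mul]
  have hwv : w ⬝ᵥ (v - a • x) = d := by
    rw [dotProduct_sub, dotProduct_smul, dotProduct_comm, h, smul_eq_mul]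
  refine ⟨a • 1 + vecMulVec (d⁻¹ • (v - a • x)) (y - a • w), ?_, ?_, ?_⟩
  · apply isUnit_det_smul_one_add_vecMulVec ha0
    have hexp : (y - a • w) ⬝ᵥ (v - a • x) = y ⬝ᵥ v - a * c - a * d := by
      rw [sub_dotProduct, smul_dotProduct, hwv, dotProduct_sub, dotProduct_smul,
        dotProduct_comm y x, smul_eq_mul, smul_eq_mul]
    rw [dotProduct_smul, smul_eq_mul, hexp,
      show a + d⁻¹ * (y ⬝ᵥ v - a * c - a * d) = d⁻¹ * (y ⬝ᵥ v - a * c) by field_simp; ring]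
    refine mul_ne_zero (inv_ne_zero hd) (sub_ne_zero.mpr fun h' => hadet ?_)
    rw [h', mul_div_cancel_right₀ _ h0]
  · rw [add_mulVec, smul_mulVec, one_mulVec, vecMulVec_mulVec, op_smul_eq_smul, hyx, smul_smul,
      mul_inv_cancel₀ hd, one_smul, add_sub_cancel]
  · rw [vecMul_add, vecMul_smul, vecMul_one, vecMul_vecMulVec, dotProduct_smul, hwv, smul_eq_mul,
      inv_mul_cancel₀ hd, one_smul, add_sub_cancel]

end Field

end Matrix

/-- Let `A` be a real `n × n` matrix having `1` as an eigenvalue.  Then `A` is similar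
over `ℝ` to a matrix all of whose row sums and column sums equal `1` if and only if
there are vectors `v, w` with `A·v = v`, `Aᵀ·w = w` and `⟨v, w⟩ ≠ 0` (i.e. the space of
left eigenvectors of `A` for `1` is not orthogonal to the space of right eigenvectors
of `A` for `1`). -/
theorem stmt13 (n : ℕ) (A : Matrix (Fin n) (Fin n) ℝ)
    (h1 : ∃ v : Fin n → ℝ, v ≠ 0 ∧ A.mulVec v = v) :
    (∃ P : Matrix (Fin n) (Fin n) ℝ, IsUnit P.det ∧
      (∀ i, ∑ j, (P⁻¹ * A * P) i j = 1) ∧ (∀ j, ∑ i, (P⁻¹ * A * P) i j = 1)) ↔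
    (∃ v w : Fin n → ℝ, A.mulVec v = v ∧ Aᵀ.mulVec w = w ∧ v ⬝ᵥ w ≠ 0) := by
  have hn : (1 : Fin n → ℝ) ⬝ᵥ 1 ≠ 0 := by
    obtain ⟨v, hv, -⟩ := h1
    rw [one_dotProduct_one, Fintype.card_fin, Nat.cast_ne_zero]
    rintro rfl
    exact hv (Subsingleton.elim _ _)
  simp only [← mulVec_one_eq_one_iff, ← one_vecMul_eq_one_iff, mulVec_transpose]
  constructor
  · rintro ⟨P, hP, hrow, hcol⟩
    have hw : (1 ᵥ* P⁻¹) ᵥ* P = 1 := by rw [vecMul_vecMul, nonsing_inv_mul _ hP, vecMul_one]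
    refine ⟨P *ᵥ 1, 1 ᵥ* P⁻¹, (inv_mul_mul_mulVec_eq_self_iff hP A 1).1 hrow,
      (vecMul_inv_mul_mul_eq_self_iff hP A hw).1 hcol, ?_⟩
    rwa [dotProduct_comm, dotProduct_mulVec, hw]
  · rintro ⟨v, w, hv, hw, hvw⟩
    obtain ⟨P, hP, hPv, hPw⟩ := exists_isUnit_det_mulVec_eq_vecMul_eq
      (x := 1) (y := 1) (v := ((1 : Fin n → ℝ) ⬝ᵥ 1 / v ⬝ᵥ w) • v) (w := w)
      (by rw [smul_dotProduct, smul_eq_mul, div_mul_cancel₀ _ hvw]) hn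
    refine ⟨P, hP, (inv_mul_mul_mulVec_eq_self_iff hP A 1).2 ?_,
      (vecMul_inv_mul_mul_eq_self_iff hP A hPw).2 hw⟩
    rw [hPv, mulVec_smul, hv]
end

section
/- Let A be a real n×n matrix (n ≥ 1) having 1 as an eigenvalue, i.e., (t − 1) divides the characteristic polynomial of A over ℝ. Then there exists a real n×n matrix B all of whose row sums and column sums equal 1 such that B has the same characteristic polynomial as A. -/
/-!
Write `charpoly A = (X - 1) * q` and realise `q` as the characteristic polynomial of some `M`.
The block matrix `D = diag(M, 1)` fixes the last basis vector `e` on both sides. Conjugate it by a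
matrix `P` whose last column is the all-ones vector `𝟙` and whose other columns span the
hyperplane `𝟙ᗮ`: then `P e = 𝟙` and `𝟙ᵀ P = n eᵀ`, so `B = P D P⁻¹` satisfies `B 𝟙 = 𝟙` and
`𝟙ᵀ B = 𝟙ᵀ`, i.e. all its row and column sums are `1`. Since `det P = n ≠ 0`, `B` is cospectral
with `D`, hence with `A`.
-/

open Polynomial Matrix

section Conj

variable {ι R : Type*} [Fintype ι] [DecidableEq ι] [CommRing R]
  {P D : Matrix ι ι R} {u v : ι → R}

theorem Matrix.conj_mulVec_eq_self (hP : IsUnit P.det) (hD : D *ᵥ u = u) (hPu : P *ᵥ u = v) :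
    (P * D * P⁻¹) *ᵥ v = v := by
  have hPinv : P⁻¹ *ᵥ v = u := by
    rw [← hPu, mulVec_mulVec, nonsing_inv_mul _ hP, one_mulVec]
  rw [← mulVec_mulVec, hPinv, ← mulVec_mulVec, hD, hPu]

theorem Matrix.vecMul_conj_eq_self (hP : IsUnit P.det) (hD : u ᵥ* D = u) (hPv : v ᵥ* P = u) :
    v ᵥ* (P * D * P⁻¹) = v := by
  rw [← vecMul_vecMul, ← vecMul_vecMul, hPv, hD, ← hPv, vecMul_vecMul, mul_nonsing_inv _ hP,
    vecMul_one]

theorem Matrix.charpoly_conj (hP : IsUnit P.det) : (P * D * P⁻¹).charpoly = D.charpoly :=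
  charpoly_units_conj ((isUnit_iff_isUnit_det P).mpr hP).unit D

end Conj

section Blocks

variable {κ K : Type*} [Fintype κ] [Field K]

theorem fromBlocks_diag_one_mulVec_sumElim (M : Matrix κ κ K) :
    fromBlocks M 0 0 (1 : Matrix (Fin 1) (Fin 1) K) *ᵥ (Sum.elim 0 1 : κ ⊕ Fin 1 → K) =
      (Sum.elim 0 1 : κ ⊕ Fin 1 → K) := by
  simp [fromBlocks_mulVec]

theorem sumElim_vecMul_fromBlocks_diag_one (M : Matrix κ κ K) :
    (Sum.elim 0 1 : κ ⊕ Fin 1 → K) ᵥ* fromBlocks M 0 0 (1 : Matrix (Fin 1) (Fin 1) K) =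
      (Sum.elim 0 1 : κ ⊕ Fin 1 → K) := by
  simp [vecMul_fromBlocks]

variable [DecidableEq κ]

variable (κ K) in
/-- Its columns are the vectors `e k - e ∗` for `k : κ`, which span the hyperplane of vectors with
coordinate sum zero, and the all-ones vector. -/
def sumZeroOnesBasisMatrix : Matrix (κ ⊕ Fin 1) (κ ⊕ Fin 1) K :=
  fromBlocks 1 (replicateCol (Fin 1) 1) (-replicateRow (Fin 1) 1) 1

theorem det_sumZeroOnesBasisMatrix :
    (sumZeroOnesBasisMatrix κ K).det = Fintype.card κ + 1 := by
  rw [sumZeroOnesBasisMatrix, det_fromBlocks_one₂₂, Matrix.mul_neg, sub_neg_eq_add]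
  refine (det_one_add_replicateCol_mul_replicateRow _ _).trans ?_
  simp [add_comm]

theorem sumZeroOnesBasisMatrix_mulVec_sumElim :
    sumZeroOnesBasisMatrix κ K *ᵥ Sum.elim 0 1 = 1 := by
  ext (i | i) <;> simp [sumZeroOnesBasisMatrix, mulVec, dotProduct, Fin.fin_one_eq_zero]

theorem one_vecMul_sumZeroOnesBasisMatrix :
    1 ᵥ* sumZeroOnesBasisMatrix κ K =
      (Fintype.card κ + 1 : K) • (Sum.elim 0 1 : κ ⊕ Fin 1 → K) := by
  ext (i | i) <;>
    simp [sumZeroOnesBasisMatrix, vecMul, dotProduct, one_apply, Fin.fin_one_eq_zero]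

theorem exists_mulVec_one_vecMul_one_charpoly_eq_mul [CharZero K] (M : Matrix κ κ K) :
    ∃ B : Matrix (κ ⊕ Fin 1) (κ ⊕ Fin 1) K,
      B *ᵥ 1 = 1 ∧ 1 ᵥ* B = 1 ∧ B.charpoly = M.charpoly * (X - 1) := by
  set P := sumZeroOnesBasisMatrix κ K
  have hP : IsUnit P.det := by
    rw [det_sumZeroOnesBasisMatrix]
    exact (Nat.cast_add_one_ne_zero _).isUnit
  refine ⟨P * fromBlocks M 0 0 1 * P⁻¹,
    conj_mulVec_eq_self hP (fromBlocks_diag_one_mulVec_sumElim M)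
      sumZeroOnesBasisMatrix_mulVec_sumElim,
    vecMul_conj_eq_self hP ?_ one_vecMul_sumZeroOnesBasisMatrix, ?_⟩
  · rw [smul_vecMul, sumElim_vecMul_fromBlocks_diag_one]
  · rw [charpoly_conj hP, charpoly_fromBlocks_zero₁₂, charpoly_one, Fintype.card_unique, pow_one]

end Blocks

section LineSums

variable {ι κ R : Type*} [Fintype ι] [Fintype κ] [NonAssocSemiring R] {B : Matrix ι ι R}

theorem Matrix.reindex_mulVec_one_eq_one (e : ι ≃ κ) (h : B *ᵥ 1 = 1) :
    reindex e e B *ᵥ 1 = 1 := by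
  simp [reindex_apply, submatrix_mulVec_equiv, h]

theorem Matrix.one_vecMul_reindex_eq_one (e : ι ≃ κ) (h : 1 ᵥ* B = 1) :
    1 ᵥ* reindex e e B = 1 := by
  simp [reindex_apply, submatrix_vecMul_equiv, h]

theorem Matrix.mulVec_one_eq_one_iff_s14 : B *ᵥ 1 = 1 ↔ ∀ i, ∑ j, B i j = 1 := by
  simp [funext_iff, mulVec, dotProduct]

theorem Matrix.one_vecMul_eq_one_iff_s14 : 1 ᵥ* B = 1 ↔ ∀ j, ∑ i, B i j = 1 := by
  simp [funext_iff, vecMul, dotProduct]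

end LineSums

theorem exists_matrix_charpoly_eq {K : Type*} [Field K] {q : K[X]} (hq : q.Monic) :
    ∃ M : Matrix (Fin q.natDegree) (Fin q.natDegree) K, M.charpoly = q :=
  let pb := AdjoinRoot.powerBasis hq.ne_zero
  ⟨Algebra.leftMulMatrix pb.basis pb.gen,
    (charpoly_leftMulMatrix pb).trans (AdjoinRoot.minpoly_powerBasis_gen_of_monic hq)⟩

theorem stmt14_general (n : ℕ) (A : Matrix (Fin n) (Fin n) ℝ)
    (h1 : (X - C 1) ∣ A.charpoly) :
    ∃ B : Matrix (Fin n) (Fin n) ℝ,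
      (∀ i, ∑ j, B i j = 1) ∧ (∀ j, ∑ i, B i j = 1) ∧ B.charpoly = A.charpoly := by
  obtain ⟨q, hq⟩ := h1
  have hq_monic : q.Monic := (monic_X_sub_C 1).of_mul_monic_left (hq ▸ A.charpoly_monic)
  have hq_natDegree : q.natDegree + 1 = n := by
    have h := A.charpoly_natDegree_eq_dim
    rwa [hq, natDegree_mul (X_sub_C_ne_zero 1) hq_monic.ne_zero, natDegree_X_sub_C,
      Fintype.card_fin, add_comm] at h
  obtain ⟨M, hM⟩ := exists_matrix_charpoly_eq hq_monic
  obtain ⟨B, hrow, hcol, hB⟩ := exists_mulVec_one_vecMul_one_charpoly_eq_mul M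
  let e : Fin q.natDegree ⊕ Fin 1 ≃ Fin n := finSumFinEquiv.trans (finCongr hq_natDegree)
  refine ⟨reindex e e B, mulVec_one_eq_one_iff_s14.mp (reindex_mulVec_one_eq_one e hrow),
    one_vecMul_eq_one_iff_s14.mp (one_vecMul_reindex_eq_one e hcol), ?_⟩
  rw [charpoly_reindex, hB, hM, hq, map_one, mul_comm]

/-- Let `A` be a real `n × n` matrix (`n ≥ 1`) having `1` as an eigenvalue, i.e.
`(t - 1)` divides its characteristic polynomial.  Then there exists a real `n × n`
matrix `B` with all row sums and column sums equal to `1` having the same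
characteristic polynomial as `A`. -/
theorem stmt14 (n : ℕ) (hn : 0 < n) (A : Matrix (Fin n) (Fin n) ℝ)
    (h1 : (X - C 1) ∣ A.charpoly) :
    ∃ B : Matrix (Fin n) (Fin n) ℝ,
      (∀ i, ∑ j, B i j = 1) ∧ (∀ j, ∑ i, B i j = 1) ∧ B.charpoly = A.charpoly :=
  stmt14_general n A h1
end
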